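/- arXiv:2203.15960 — 4 statements merged into one kernel-verified Lean document; each statement's English description precedes it below -/
import Mathlib

section
/- Let s, t ∈ Ω_∞, i.e. s, t : ℕ → ℤ are sequences in which every consecutive pair (s_i, s_{i+1}) (respectively (t_i, t_{i+1})) has the form (2j, 2j), (2j, 2j+1), (2j+1, 2j+2) or (2j+1, 2j+3) for some j ∈ ℤ. If s_i ≡ t_i (mod 2) for every i ∈ ℕ, then there exists an integer n such that s_i = t_i + 2n for all i ∈ ℕ. -/
open Set Filter Topology MeasureTheory Function
open scoped ENNReal Classical

noncomputable section

/-- The circle ℝ/ℤ. -/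
abbrev Circle1 : Type := AddCircle (1 : ℝ)

/-- The k-fold cover ℝ/kℤ. -/
abbrev CircleK (k : ℕ) : Type := AddCircle ((k : ℝ))

/-- Projection ℝ → ℝ/ℤ. -/
def mk1 : ℝ → Circle1 := fun x => (x : Circle1)

/-- Projection ℝ → ℝ/kℤ. -/
def mkk (k : ℕ) : ℝ → CircleK k := fun x => (x : CircleK k)

/-- Covering projection S_k → S¹ induced by the identity on ℝ. -/
def piK (k : ℕ) : CircleK k → Circle1 :=
  QuotientAddGroup.map (AddSubgroup.zmultiples ((k : ℕ) : ℝ)) (AddSubgroup.zmultiples (1 : ℝ))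
    (AddMonoidHom.id ℝ)
    (by
      intro x hx
      obtain ⟨n, rfl⟩ := AddSubgroup.mem_zmultiples_iff.mp hx
      simp only [AddSubgroup.mem_comap, AddMonoidHom.id_apply]
      exact AddSubgroup.mem_zmultiples_iff.mpr
        ⟨n * (k : ℤ), by push_cast [zsmul_eq_mul]; ring⟩)

/-- Deck transformation of S_k, induced by x ↦ x + 1. -/
def TK (k : ℕ) : CircleK k → CircleK k := fun x => x + mkk k 1

/-- Forward orbit of a point. -/
def fwdOrbit {X : Type*} (f : X → X) (x : X) : Set X := Set.range fun n : ℕ => f^[n] x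

/-- A nonempty compact invariant set on which every forward orbit is dense. -/
def IsMinimalSet {X : Type*} [TopologicalSpace X] (f : X → X) (Z : Set X) : Prop :=
  Z.Nonempty ∧ IsCompact Z ∧ Set.MapsTo f Z Z ∧ ∀ z ∈ Z, Z ⊆ closure (fwdOrbit f z)

/-- x = lim f^[n i] x along some sequence n i → ∞. -/
def IsRecurrentPt {X : Type*} [TopologicalSpace X] (f : X → X) (x : X) : Prop :=
  ∃ n : ℕ → ℕ, Tendsto n atTop atTop ∧ Tendsto (fun i => f^[n i] x) atTop (𝓝 x)

/-- The point x has rotation number ρ for the lift gt. -/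
def HasPtRotNum (gt : ℝ → ℝ) (x ρ : ℝ) : Prop :=
  Tendsto (fun n : ℕ => (gt^[n] x - x) / n) atTop (𝓝 ρ)

/-- gt has rotation number ρ (the limit exists for all points and equals ρ). -/
def HasRotNum (gt : ℝ → ℝ) (ρ : ℝ) : Prop := ∀ x, HasPtRotNum gt x ρ

/-- The rotation set of a lift. -/
def rotSet (gt : ℝ → ℝ) : Set ℝ := {ρ | ∃ x, HasPtRotNum gt x ρ}

/-- Continuous nondecreasing degree-one lift. -/
def IsSemiMonotoneLift (ht : ℝ → ℝ) : Prop :=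
  Continuous ht ∧ Monotone ht ∧ ∀ x, ht (x + 1) = ht x + 1

/-- [a,b] is (a fundamental-domain representative of) a maximal nontrivial closed
arc on which the induced circle map is constant. -/
def IsFlatSpot (ht : ℝ → ℝ) (a b : ℝ) : Prop :=
  a < b ∧ b - a < 1 ∧ (∀ x ∈ Set.Icc a b, ht x = ht a) ∧
    ∀ a' b', a' ≤ a → b ≤ b' → (∀ x ∈ Set.Icc a' b', ht x = ht a) → a' = a ∧ b' = b

/-- The left shift on one-sided sequences. -/
def shiftSeq {α : Type*} : (ℕ → α) → ℕ → α := fun s n => s (n + 1)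

/-- Strict lexicographic order on one-sided sequences. -/
def lexLt {α : Type*} [LT α] (s t : ℕ → α) : Prop :=
  ∃ n, (∀ i, i < n → s i = t i) ∧ s n < t n

/-- Lexicographic order on one-sided sequences. -/
def lexLe {α : Type*} [LT α] (s t : ℕ → α) : Prop := s = t ∨ lexLt s t

/-- Reduction of every entry mod 2. -/
def pihat : (ℕ → ℕ) → ℕ → ℕ := fun s n => s n % 2

/-- The sequence s has symbolic rotation number ω: the averages of the mod-2
reductions of its entries converge to ω. -/
def symbRot (s : ℕ → ℕ) (ω : ℝ) : Prop :=
  Tendsto (fun n : ℕ => (∑ i ∈ Finset.range (n + 1), ((s i % 2 : ℕ) : ℝ)) / (n + 1))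
    atTop (𝓝 ω)

/-- Allowed transitions for Ω_k (entries mod 2k). -/
def transK (k : ℕ) (a c : ℕ) : Prop :=
  (Even a ∧ (c = a ∨ c = a + 1)) ∨ (Odd a ∧ (c = (a + 1) % (2 * k) ∨ c = (a + 2) % (2 * k)))

/-- The subshift Ω_k ⊆ Σ⁺_{2k}. -/
def OmegaK (k : ℕ) : Set (ℕ → ℕ) :=
  {s | (∀ n, s n < 2 * k) ∧ ∀ n, transK k (s n) (s (n + 1))}

/-- Allowed transitions for Ω_∞. -/
def transZ (a c : ℤ) : Prop :=
  (Even a ∧ (c = a ∨ c = a + 1)) ∨ (Odd a ∧ (c = a + 1 ∨ c = a + 2))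

/-- The subshift Ω_∞ ⊆ ℤ^ℕ. -/
def OmegaInf : Set (ℕ → ℤ) := {s | ∀ n, transZ (s n) (s (n + 1))}

/-- p̂_k : Ω_∞ → Ω_k, reduction of all entries mod 2k. -/
def projK (k : ℕ) : (ℕ → ℤ) → ℕ → ℕ := fun s n => (s n % (2 * k : ℤ)).toNat

/-- A symbolic k-fold semi-monotone subset of Ω_k. -/
def SymbolicKfsm (k : ℕ) (Z : Set (ℕ → ℕ)) : Prop :=
  Z ⊆ OmegaK k ∧ Set.MapsTo shiftSeq Z Z ∧
    ∃ Z' : Set (ℕ → ℤ), Z' ⊆ OmegaInf ∧ Set.MapsTo shiftSeq Z' Z' ∧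
      (fun s : ℕ → ℤ => fun n => s n + 2 * k) '' Z' = Z' ∧
      (∀ s ∈ Z', ∀ t ∈ Z', lexLe s t → lexLe (shiftSeq s) (shiftSeq t)) ∧
      projK k '' Z' = Z

/-- The dynamical order interval ⟨a, b⟩. -/
def dynInterval (a b : ℕ → ℕ) : Set (ℕ → ℕ) :=
  {s | ∀ n, lexLe a (shiftSeq^[n] s) ∧ lexLe (shiftSeq^[n] s) b}

/-- The unique shift-invariant probability measure on the orbit of a periodic
point of period N: the uniform average of point masses along the orbit. -/
noncomputable def orbitMeasure (s : ℕ → ℕ) (N : ℕ) : Measure (ℕ → ℕ) :=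
  (N : ℝ≥0∞)⁻¹ • ∑ i ∈ Finset.range N, Measure.dirac (shiftSeq^[i] s)

/-! ### The Hedlund–Morse construction -/

/-- Partial sums ν₁ + ⋯ + ν_j. -/
def psum {k : ℕ} (ν : Fin k → ℝ) (j : ℕ) : ℝ := ∑ i : Fin k, if (i : ℕ) < j then ν i else 0

/-- An allowable HM parameter pair. -/
def HMAllowable {k : ℕ} (ω : ℝ) (ν : Fin k → ℝ) : Prop :=
  0 < ω ∧ ω < 1 ∧ (∀ i, 0 ≤ ν i) ∧ ∑ i, ν i = k * (1 - ω)

/-- Left endpoint of the HM address interval X_m. -/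
def hmL {k : ℕ} (ω : ℝ) (ν : Fin k → ℝ) (m : ℕ) : ℝ :=
  if Even m then psum ν (m / 2) + ((m / 2 : ℕ) : ℝ) * ω
  else psum ν (m / 2 + 1) + ((m / 2 : ℕ) : ℝ) * ω

/-- Right endpoint of the HM address interval X_m. -/
def hmR {k : ℕ} (ω : ℝ) (ν : Fin k → ℝ) (m : ℕ) : ℝ :=
  if Even m then psum ν (m / 2 + 1) + ((m / 2 : ℕ) : ℝ) * ω
  else psum ν (m / 2 + 1) + ((m / 2 + 1 : ℕ) : ℝ) * ω

/-- The HM address interval X_m ⊆ ℝ (a fundamental-domain representative). -/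
def hmX {k : ℕ} (ω : ℝ) (ν : Fin k → ℝ) (m : ℕ) : Set ℝ := Set.Icc (hmL ω ν m) (hmR ω ν m)

/-- Rigid rotation by ω on S_k. -/
def RotK (k : ℕ) (ω : ℝ) : CircleK k → CircleK k := fun x => x + mkk k ω

/-- The good set: points whose forward rotation orbit avoids all endpoints of the
address intervals. -/
def hmGood (k : ℕ) (ω : ℝ) (ν : Fin k → ℝ) : Set (CircleK k) :=
  {x | ∀ n : ℕ, ∀ m, m < 2 * k →
    (RotK k ω)^[n] x ≠ mkk k (hmL ω ν m) ∧ (RotK k ω)^[n] x ≠ mkk k (hmR ω ν m)}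

/-- The address of a point of S_k (the index m with x ∈ X_m; junk value 0 if none). -/
noncomputable def hmAddr (k : ℕ) (ω : ℝ) (ν : Fin k → ℝ) (x : CircleK k) : ℕ :=
  if h : ∃ m, m < 2 * k ∧ x ∈ mkk k '' hmX ω ν m then h.choose else 0

/-- The HM itinerary of a point of S_k. -/
noncomputable def hmZeta (k : ℕ) (ω : ℝ) (ν : Fin k → ℝ) (x : CircleK k) : ℕ → ℕ :=
  fun n => hmAddr k ω ν ((RotK k ω)^[n] x)

/-- B_k(ω,ν): the closure of the set of itineraries of good points. -/
noncomputable def hmB (k : ℕ) (ω : ℝ) (ν : Fin k → ℝ) : Set (ℕ → ℕ) :=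
  closure (hmZeta k ω ν '' hmGood k ω ν)

/-- λ_k(ω,ν) = ζ_*(Leb)/k, where Leb is Lebesgue measure on S_k = [0,k). -/
noncomputable def hmLambda (k : ℕ) (ω : ℝ) (ν : Fin k → ℝ) : Measure (ℕ → ℕ) :=
  (k : ℝ≥0∞)⁻¹ •
    ((((volume.restrict (Set.Ico (0 : ℝ) (k : ℝ))).map (mkk k)).restrict
        (hmGood k ω ν)).map (hmZeta k ω ν))

/-- The left cyclic shift τ on ℝ^k. -/
def cyc {k : ℕ} (ν : Fin k → ℝ) : Fin k → ℝ :=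
  fun i => ν ⟨(i.val + 1) % k, Nat.mod_lt _ (Nat.lt_of_le_of_lt (Nat.zero_le _) i.isLt)⟩

/-- The Sturmian minimal set with rotation number ω. -/
noncomputable def sturmianSet (ω : ℝ) : Set (ℕ → ℕ) :=
  if ω = 0 then {fun _ => 0}
  else if ω = 1 then {fun _ => 1}
  else hmB 1 ω fun _ => 1 - ω

/-! ### The class 𝒢 of bimodal degree-one circle maps -/

/-- Piecewise C² on [0,1]. -/
def PiecewiseC2 (f : ℝ → ℝ) : Prop :=
  ∃ (n : ℕ) (x : ℕ → ℝ), x 0 = 0 ∧ x n = 1 ∧ (∀ i, i < n → x i ≤ x (i + 1)) ∧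
    ∀ i, i < n → ContDiffOn ℝ 2 f (Set.Ioo (x i) (x (i + 1)))

/-- g : S¹ → S¹ belongs to the class 𝒢, with lift gt and turning point xmax. -/
structure GMap (g : Circle1 → Circle1) (gt : ℝ → ℝ) (xmax : ℝ) : Prop where
  cont : Continuous gt
  pw : PiecewiseC2 gt
  deg : ∀ x, gt (x + 1) = gt x + 1
  lift : ∀ x, g (mk1 x) = mk1 (gt x)
  xmax_pos : 0 < xmax
  xmax_lt_one : xmax < 1
  expand : ∀ x ∈ Set.Ioo (0 : ℝ) xmax, ∃ d, 1 < d ∧ HasDerivAt gt d x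
  dec : ∀ x ∈ Set.Icc xmax 1, ∀ y ∈ Set.Icc xmax 1, x < y → gt y < gt x
  low : 0 ≤ gt 0
  mid : gt 0 < gt xmax
  high : gt xmax ≤ xmax + 1

/-- The address intervals I_m ⊆ ℝ: I_{2j} = [j, zmax+j], I_{2j+1} = [zmin+j, xmax+j]. -/
def addrI (zmax zmin xmax : ℝ) (m : ℤ) : Set ℝ :=
  if Even m then Set.Icc ((m / 2 : ℤ) : ℝ) (zmax + ((m / 2 : ℤ) : ℝ))
  else Set.Icc (zmin + (((m - 1) / 2 : ℤ) : ℝ)) (xmax + (((m - 1) / 2 : ℤ) : ℝ))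

/-- Λ_∞(g): points of ℝ whose forward gt-orbit stays in the address intervals. -/
def LambdaInf (gt : ℝ → ℝ) (zmax zmin xmax : ℝ) : Set ℝ :=
  {x | ∀ n : ℕ, ∃ m : ℤ, gt^[n] x ∈ addrI zmax zmin xmax m}

/-- Λ_k(g): points of S_k whose forward g_k-orbit stays in I_0 ∪ ⋯ ∪ I_{2k-1}. -/
def LambdaK (k : ℕ) (gk : CircleK k → CircleK k) (zmax zmin xmax : ℝ) : Set (CircleK k) :=
  {x | ∀ n : ℕ, ∃ m : ℕ, m < 2 * k ∧ gk^[n] x ∈ mkk k '' addrI zmax zmin xmax (m : ℤ)}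

/-- Λ₁(g): points of S¹ whose forward g-orbit stays in I₀ ∪ I₁. -/
def Lambda1 (g : Circle1 → Circle1) (zmax zmin xmax : ℝ) : Set Circle1 :=
  {x | ∀ n : ℕ, g^[n] x ∈ mk1 '' Set.Icc 0 zmax ∪ mk1 '' Set.Icc zmin xmax}

/-- A k-fold semi-monotone subset of S_k: it has a lift Z' ⊆ ℝ that is
gt-invariant, invariant under x ↦ x + k, and on which gt is weakly order
preserving. -/
def PhysKfsmK (gt : ℝ → ℝ) (k : ℕ) (Z : Set (CircleK k)) : Prop :=
  ∃ Z' : Set ℝ, (∀ x ∈ Z', gt x ∈ Z') ∧ (fun x => x + (k : ℝ)) '' Z' = Z' ∧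
    (∀ x ∈ Z', ∀ y ∈ Z', x < y → gt x ≤ gt y) ∧ mkk k '' Z' = Z

/-- A k-fold semi-monotone subset of S¹. -/
def PhysKfsm1 (gt : ℝ → ℝ) (k : ℕ) (Z : Set Circle1) : Prop :=
  ∃ Z' : Set ℝ, (∀ x ∈ Z', gt x ∈ Z') ∧ (fun x => x + (k : ℝ)) '' Z' = Z' ∧
    (∀ x ∈ Z', ∀ y ∈ Z', x < y → gt x ≤ gt y) ∧ mk1 '' Z' = Z

end

/-- Two sequences in Ω_∞ whose entries agree mod 2 differ by a
constant even integer. -/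
theorem statement7 (s t : ℕ → ℤ) (hs : s ∈ OmegaInf) (ht : t ∈ OmegaInf)
    (hpar : ∀ i, s i % 2 = t i % 2) :
    ∃ n : ℤ, ∀ i, s i = t i + 2 * n := by
  refine ⟨(s 0 - t 0) / 2, ?_⟩
  intro i
  induction i with
  | zero => have h := hpar 0; omega
  | succ i ih =>
    have h1 := hs i
    have h2 := ht i
    have h3 := hpar i
    have h4 := hpar (i + 1)
    unfold OmegaInf transZ at h1 h2
    rw [Int.even_iff, Int.odd_iff] at h1 h2
    omega
end

section
/- Let g ∈ 𝒢 with lift g̃ and let k ≥ 1 be a finite integer. A g_k-invariant set Z ⊆ Λ_k(g) is k-fold semi-monotone if and only if its image ι_k(Z) ⊆ Ω_k under the itinerary map is symbolic k-fold semi-monotone. -/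
/-!
On each interval `[j, xmax + j]` the lift is expanding and strictly increasing, and it maps
every address interval across whole address intervals. Hence integer itineraries obey the
transition rules of `Ω_∞`, and two distinct points of `Λ_∞` never share an itinerary: their
distance would grow by a fixed amount at every step while staying below `xmax`. So the integer
itinerary `ι_∞` is strictly increasing from `Λ_∞` into the lexicographically ordered `Ω_∞`; it
turns `g̃` into the shift and `x ↦ x + k` into adding `2k`. Weak monotonicity of `g̃` on a lift
`Z'` therefore passes to the shift on `ι_∞(Z')`, whose reduction mod `2k` is `ι_k(Z)`; conversely
a symbolic lift `W` is realised by `{x | p_k x ∈ Z, ι_∞ x ∈ W}`, which projects onto all of `Z`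
because two sequences of `Ω_∞` with equal reductions mod `2k` differ by a constant.
-/

open Set Filter Topology MeasureTheory Function
open scoped ENNReal Classical

noncomputable section

/-- The positive-slope region P(h) in ℝ: the complement of the interiors of all
the (translated) flat spots. -/
def flatComplR {l : ℕ} (a b : Fin l → ℝ) : Set ℝ :=
  {x | ∀ (i : Fin l) (n : ℤ), x ∉ Set.Ioo (a i + n) (b i + n)}

/-- The positive-slope region P(h) in the circle: the complement of the interiors
of the flat spots. -/
def flatComplC {l : ℕ} (a b : Fin l → ℝ) : Set Circle1 :=
  (⋃ i, mk1 '' Set.Ioo (a i) (b i))ᶜ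

end

theorem lexLe_iff_toLex_le {α : Type*} [PartialOrder α] {s t : ℕ → α} :
    lexLe s t ↔ toLex s ≤ toLex t := by
  rw [le_iff_eq_or_lt, toLex_inj]
  rfl

theorem add_neg_mem_iff_of_image_add_eq {G : Type*} [AddGroup G] {S : Set G} {a : G}
    (h : (· + a) '' S = S) (x : G) : x + -a ∈ S ↔ x ∈ S := by
  conv_rhs => rw [← h, image_add_right]
  rfl

theorem exists_pos_le_sub_of_strictMonoOn {f : ℝ → ℝ} {p q δ : ℝ} (hf : Continuous f)
    (hmono : StrictMonoOn f (Icc p q)) (hδ : 0 < δ) (hδq : p + δ ≤ q) :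
    ∃ c > 0, ∀ a ∈ Icc p q, ∀ b ∈ Icc p q, a + δ ≤ b → c ≤ f b - f a := by
  obtain ⟨a₀, ha₀, hmin⟩ := isCompact_Icc.exists_isMinOn (nonempty_Icc.2 (by linarith))
    ((hf.comp (continuous_add_const δ)).sub hf).continuousOn (s := Icc p (q - δ))
  have hmem : ∀ {a}, a ∈ Icc p (q - δ) → a ∈ Icc p q ∧ a + δ ∈ Icc p q := fun ha =>
    ⟨⟨ha.1, by linarith [ha.2]⟩, ⟨by linarith [ha.1], by linarith [ha.2]⟩⟩
  refine ⟨f (a₀ + δ) - f a₀, ?_, fun a ha b hb hab => ?_⟩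
  · linarith [hmono (hmem ha₀).1 (hmem ha₀).2 (by linarith)]
  · have ha' : a ∈ Icc p (q - δ) := ⟨ha.1, by linarith [hb.2]⟩
    calc f (a₀ + δ) - f a₀ ≤ f (a + δ) - f a := hmin ha'
      _ ≤ f b - f a := by gcongr; exact hmono.monotoneOn (hmem ha').2 hb hab

section Address

variable {zmax zmin xmax : ℝ}

@[simp]
theorem addrI_two_mul (j : ℤ) : addrI zmax zmin xmax (2 * j) = Icc (j : ℝ) (zmax + j) := by
  simp [addrI]

@[simp]
theorem addrI_two_mul_add_one (j : ℤ) :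
    addrI zmax zmin xmax (2 * j + 1) = Icc (zmin + j : ℝ) (xmax + j) := by
  have : ¬ Even (2 * j + 1) := Int.not_even_iff_odd.2 (odd_two_mul_add_one j)
  simp [addrI, this]

theorem add_int_mem_addrI {x : ℝ} {m : ℤ} (t : ℤ) (h : x ∈ addrI zmax zmin xmax m) :
    x + t ∈ addrI zmax zmin xmax (m + 2 * t) := by
  obtain ⟨j, rfl | rfl⟩ := Int.even_or_odd' m
  · rw [← mul_add, addrI_two_mul]
    simp only [addrI_two_mul, mem_Icc] at h
    push_cast
    constructor <;> linarith
  · rw [show 2 * j + 1 + 2 * t = 2 * (j + t) + 1 by ring, addrI_two_mul_add_one]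
    simp only [addrI_two_mul_add_one, mem_Icc] at h
    push_cast
    constructor <;> linarith

theorem addrI_subset_Icc (hzx : zmax ≤ xmax) (hz : 0 ≤ zmin) (m : ℤ) :
    addrI zmax zmin xmax m ⊆ Icc ((m / 2 : ℤ) : ℝ) (xmax + (m / 2 : ℤ)) := by
  obtain ⟨j, rfl | rfl⟩ := Int.even_or_odd' m
  · rw [addrI_two_mul, Int.mul_ediv_cancel_left _ two_ne_zero]
    exact Icc_subset_Icc le_rfl (by linarith)
  · rw [addrI_two_mul_add_one, show (2 * j + 1) / 2 = j by omega]
    exact Icc_subset_Icc (by linarith) le_rfl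

theorem lt_of_mem_addrI_of_lt (h0 : 0 < zmax) (h1 : zmax < zmin) (h2 : zmin < xmax)
    (h3 : xmax < 1) {x y : ℝ} {a b : ℤ} (hx : x ∈ addrI zmax zmin xmax a)
    (hy : y ∈ addrI zmax zmin xmax b) (hab : a < b) : x < y := by
  obtain ⟨i, rfl | rfl⟩ := Int.even_or_odd' a <;>
    obtain ⟨j, rfl | rfl⟩ := Int.even_or_odd' b <;>
    simp only [addrI_two_mul, addrI_two_mul_add_one, mem_Icc] at hx hy
  · have : (i : ℝ) + 1 ≤ j := by exact_mod_cast (by omega : i + 1 ≤ j)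
    linarith
  · have : (i : ℝ) ≤ j := by exact_mod_cast (by omega : i ≤ j)
    linarith
  · have : (i : ℝ) + 1 ≤ j := by exact_mod_cast (by omega : i + 1 ≤ j)
    linarith
  · have : (i : ℝ) + 1 ≤ j := by exact_mod_cast (by omega : i + 1 ≤ j)
    linarith

theorem eq_two_mul_or_of_mem_Icc (h0 : 0 < zmax) (h1 : zmax < zmin) (h2 : zmin < xmax)
    (h3 : xmax < 1) {y : ℝ} {j c : ℤ} (hy : y ∈ Icc (j : ℝ) (xmax + j))
    (hc : y ∈ addrI zmax zmin xmax c) : c = 2 * j ∨ c = 2 * j + 1 := by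
  have hj : (j : ℝ) ∈ addrI zmax zmin xmax (2 * j) := by simp [h0.le]
  have hxj : xmax + j ∈ addrI zmax zmin xmax (2 * j + 1) := by simp [h2.le]
  have hlo : ¬ c < 2 * j := fun h => (lt_of_mem_addrI_of_lt h0 h1 h2 h3 hc hj h).not_ge hy.1
  have hhi : ¬ 2 * j + 1 < c := fun h => (lt_of_mem_addrI_of_lt h0 h1 h2 h3 hxj hc h).not_ge hy.2
  omega

/-- The address of a point of `⋃ m, addrI m`; junk value `0` off this union. -/
noncomputable def addr (zmax zmin xmax x : ℝ) : ℤ :=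
  if h : ∃ m, x ∈ addrI zmax zmin xmax m then h.choose else 0

theorem addr_eq_of_mem_addrI (h0 : 0 < zmax) (h1 : zmax < zmin) (h2 : zmin < xmax)
    (h3 : xmax < 1) {x : ℝ} {m : ℤ} (h : x ∈ addrI zmax zmin xmax m) :
    addr zmax zmin xmax x = m := by
  have hex : ∃ m, x ∈ addrI zmax zmin xmax m := ⟨m, h⟩
  rw [addr, dif_pos hex]
  by_contra hne
  rcases lt_or_gt_of_ne hne with hlt | hlt
  · exact (lt_of_mem_addrI_of_lt h0 h1 h2 h3 hex.choose_spec h hlt).false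
  · exact (lt_of_mem_addrI_of_lt h0 h1 h2 h3 h hex.choose_spec hlt).false

theorem addr_le_addr (h0 : 0 < zmax) (h1 : zmax < zmin) (h2 : zmin < xmax) (h3 : xmax < 1)
    {x y : ℝ} {a b : ℤ} (hx : x ∈ addrI zmax zmin xmax a) (hy : y ∈ addrI zmax zmin xmax b)
    (hxy : x ≤ y) : addr zmax zmin xmax x ≤ addr zmax zmin xmax y := by
  rw [addr_eq_of_mem_addrI h0 h1 h2 h3 hx, addr_eq_of_mem_addrI h0 h1 h2 h3 hy]
  exact not_lt.1 fun hba => (lt_of_mem_addrI_of_lt h0 h1 h2 h3 hy hx hba).not_ge hxy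

variable {gt : ℝ → ℝ}

/-- The paper's integer itinerary `ι_∞`, meaningful on `Λ_∞`. -/
noncomputable def itin (gt : ℝ → ℝ) (zmax zmin xmax x : ℝ) : ℕ → ℤ :=
  fun n => addr zmax zmin xmax (gt^[n] x)

theorem shiftSeq_itin (x : ℝ) :
    shiftSeq (itin gt zmax zmin xmax x) = itin gt zmax zmin xmax (gt x) :=
  rfl

theorem map_mem_LambdaInf {x : ℝ} (hx : x ∈ LambdaInf gt zmax zmin xmax) :
    gt x ∈ LambdaInf gt zmax zmin xmax :=
  fun n => hx (n + 1)

end Address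

section Symbolic

variable {k : ℕ}

theorem natCast_projK (hk : 1 ≤ k) (s : ℕ → ℤ) (n : ℕ) :
    (projK k s n : ℤ) = s n % (2 * k : ℤ) :=
  Int.toNat_of_nonneg (Int.emod_nonneg _ (by omega))

theorem transK_projK (hk : 1 ≤ k) {s : ℕ → ℤ} {n : ℕ} (h : transZ (s n) (s (n + 1))) :
    transK k (projK k s n) (projK k s (n + 1)) := by
  have e := natCast_projK hk s
  have hpar : s n % (2 * k : ℤ) % 2 = s n % 2 := Int.emod_emod_of_dvd _ (dvd_mul_right 2 _)
  have h0 : 0 ≤ s n % (2 * k : ℤ) := Int.emod_nonneg _ (by omega)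
  have hlt : s n % (2 * k : ℤ) < 2 * k := Int.emod_lt_of_pos _ (by omega)
  simp only [transK, transZ, Nat.even_iff, Nat.odd_iff, Int.even_iff, Int.odd_iff] at h ⊢
  zify
  rw [e n, e (n + 1), hpar]
  rcases h with ⟨hn, h | h⟩ | ⟨hn, h | h⟩ <;> rw [h]
  · exact Or.inl ⟨hn, Or.inl rfl⟩
  · refine Or.inl ⟨hn, Or.inr ?_⟩
    rw [← Int.emod_add_emod]
    exact Int.emod_eq_of_lt (by omega) (by omega)
  · exact Or.inr ⟨hn, Or.inl (Int.emod_add_emod _ _ _).symm⟩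
  · exact Or.inr ⟨hn, Or.inr (Int.emod_add_emod _ _ _).symm⟩

theorem projK_mem_OmegaK (hk : 1 ≤ k) {s : ℕ → ℤ} (hs : s ∈ OmegaInf) :
    projK k s ∈ OmegaK k := by
  refine ⟨fun n => ?_, fun n => transK_projK hk (hs n)⟩
  have e := natCast_projK hk s n
  have := Int.emod_lt_of_pos (s n) (show (0 : ℤ) < 2 * k by omega)
  omega

theorem symbolicKfsm_iff (hk : 1 ≤ k) {Y : Set (ℕ → ℕ)} :
    SymbolicKfsm k Y ↔ ∃ W ⊆ OmegaInf, MapsTo shiftSeq W W ∧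
      (fun s : ℕ → ℤ => fun n => s n + 2 * k) '' W = W ∧
      (∀ s ∈ W, ∀ t ∈ W, lexLe s t → lexLe (shiftSeq s) (shiftSeq t)) ∧
      projK k '' W = Y := by
  refine ⟨fun ⟨_, _, W, hW⟩ => ⟨W, hW⟩, ?_⟩
  rintro ⟨W, hWΩ, hWσ, hWT, hWlex, rfl⟩
  refine ⟨?_, ?_, W, hWΩ, hWσ, hWT, hWlex, rfl⟩
  · rintro _ ⟨s, hs, rfl⟩
    exact projK_mem_OmegaK hk (hWΩ hs)
  · rintro _ ⟨s, hs, rfl⟩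
    exact ⟨shiftSeq s, hWσ hs, rfl⟩

/-- The difference of the two sequences is a multiple of `2k` that changes by at most `1` per
step. -/
theorem exists_eq_add_of_projK_eq (hk : 1 ≤ k) {s t : ℕ → ℤ} (hs : s ∈ OmegaInf)
    (ht : t ∈ OmegaInf) (h : projK k s = projK k t) :
    ∃ q : ℤ, s = fun n => t n + 2 * (q * k) := by
  have hdvd : ∀ n, (2 * k : ℤ) ∣ s n - t n := fun n => by
    have := congrArg (fun u : ℕ → ℕ => (u n : ℤ)) h
    simp only [natCast_projK hk] at this
    exact Int.ModEq.dvd this.symm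
  have hconst : ∀ n, s n - t n = s 0 - t 0 := by
    intro n
    induction n with
    | zero => rfl
    | succ n ih =>
      have hpar : (2 : ℤ) ∣ s n - t n := (dvd_mul_right 2 _).trans (hdvd n)
      have hstep : |(s (n + 1) - t (n + 1)) - (s n - t n)| < 2 * k := by
        have : (1 : ℤ) ≤ k := by exact_mod_cast hk
        rw [abs_lt]
        obtain ⟨⟨a, ha⟩, hs'⟩ | ⟨⟨a, ha⟩, hs'⟩ := hs n <;>
          obtain ⟨⟨b, hb⟩, ht'⟩ | ⟨⟨b, hb⟩, ht'⟩ := ht n <;> omega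
      have := Int.eq_zero_of_abs_lt_dvd (dvd_sub (hdvd (n + 1)) (hdvd n)) hstep
      omega
  obtain ⟨q, hq⟩ := hdvd 0
  exact ⟨q, funext fun n => by linarith [hconst n]⟩

end Symbolic

section Circle

variable {k : ℕ}

theorem mkk_eq_mkk_iff {x y : ℝ} : mkk k x = mkk k y ↔ ∃ q : ℤ, x = y + (q * k : ℤ) := by
  rw [mkk, mkk, ← sub_eq_zero, ← AddCircle.coe_sub, AddCircle.coe_eq_zero_iff]
  refine exists_congr fun q => ?_
  rw [zsmul_eq_mul]
  push_cast
  constructor <;> intro h <;> linarith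

theorem mkk_add_int_mul (x : ℝ) (q : ℤ) : mkk k (x + (q * k : ℤ)) = mkk k x :=
  mkk_eq_mkk_iff.2 ⟨q, rfl⟩

theorem mem_LambdaInf_of_mkk_mem_LambdaK {gt : ℝ → ℝ} {gk : CircleK k → CircleK k}
    {zmax zmin xmax : ℝ} (hgk : ∀ x : ℝ, gk (mkk k x) = mkk k (gt x)) {x : ℝ}
    (hx : mkk k x ∈ LambdaK k gk zmax zmin xmax) : x ∈ LambdaInf gt zmax zmin xmax := by
  intro n
  obtain ⟨m, -, w, hw, hwx⟩ := hx n
  rw [← Semiconj.iterate_right (fun y => (hgk y).symm) n x] at hwx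
  obtain ⟨q, hq⟩ := mkk_eq_mkk_iff.1 hwx.symm
  exact ⟨m + 2 * (q * k), hq ▸ add_int_mem_addrI _ hw⟩

end Circle

structure MarkovLift (gt : ℝ → ℝ) (zmax zmin xmax : ℝ) : Prop where
  continuous : Continuous gt
  map_add_one : ∀ x, gt (x + 1) = gt x + 1
  expand : ∀ x ∈ Ioo 0 xmax, ∃ d, 1 < d ∧ HasDerivAt gt d x
  zmax_pos : 0 < zmax
  zmax_lt_zmin : zmax < zmin
  zmin_lt_xmax : zmin < xmax
  xmax_lt_one : xmax < 1
  map_zmax : gt zmax = xmax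
  map_zmin : gt zmin = 1
  map_zero_nonneg : 0 ≤ gt 0
  map_xmax_le : gt xmax ≤ xmax + 1

theorem GMap.markovLift {g : Circle1 → Circle1} {gt : ℝ → ℝ} {xmax zmax zmin : ℝ}
    (hG : GMap g gt xmax) (h0 : 0 < zmax) (h1 : zmax < zmin) (h2 : zmin < xmax)
    (hzmax : gt zmax = xmax) (hzmin : gt zmin = 1) : MarkovLift gt zmax zmin xmax :=
  ⟨hG.cont, hG.deg, hG.expand, h0, h1, h2, hG.xmax_lt_one, hzmax, hzmin, hG.low, hG.high⟩

namespace MarkovLift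

variable {gt : ℝ → ℝ} {zmax zmin xmax : ℝ}

theorem iterate_add_int (H : MarkovLift gt zmax zmin xmax) (n : ℕ) (x : ℝ) (j : ℤ) :
    gt^[n] (x + j) = gt^[n] x + j :=
  AddConstMapClass.map_add_int (AddConstMap.mk gt H.map_add_one ^ n) x j

theorem map_add_int (H : MarkovLift gt zmax zmin xmax) (x : ℝ) (j : ℤ) :
    gt (x + j) = gt x + j :=
  H.iterate_add_int 1 x j

theorem sub_id_add_int (H : MarkovLift gt zmax zmin xmax) (x : ℝ) (j : ℤ) :
    gt (x + j) - (x + j) = gt x - x := by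
  rw [H.map_add_int]
  ring

theorem strictMonoOn_sub_id (H : MarkovLift gt zmax zmin xmax) (j : ℤ) :
    StrictMonoOn (fun x => gt x - x) (Icc (j : ℝ) (xmax + j)) := by
  have h0 : StrictMonoOn (fun x => gt x - x) (Icc 0 xmax) := by
    refine strictMonoOn_of_deriv_pos (convex_Icc 0 xmax)
      (H.continuous.sub continuous_id).continuousOn fun x hx => ?_
    rw [interior_Icc] at hx
    obtain ⟨d, hd, hder⟩ := H.expand x hx
    have hψ : HasDerivAt (fun y => gt y - y) (d - 1) x := hder.sub (hasDerivAt_id' x)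
    rw [hψ.deriv]
    linarith
  intro a ha b hb hab
  have := h0 (show a - j ∈ Icc 0 xmax from ⟨by linarith [ha.1], by linarith [ha.2]⟩)
    (show b - j ∈ Icc 0 xmax from ⟨by linarith [hb.1], by linarith [hb.2]⟩) (by linarith)
  have ea := H.sub_id_add_int (a - j) j
  have eb := H.sub_id_add_int (b - j) j
  simp only [sub_add_cancel] at ea eb this
  linarith

theorem strictMonoOn (H : MarkovLift gt zmax zmin xmax) (j : ℤ) :
    StrictMonoOn gt (Icc (j : ℝ) (xmax + j)) := fun a ha b hb hab => by
  linarith [H.strictMonoOn_sub_id j ha hb hab]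

theorem exists_pos_add_le_sub (H : MarkovLift gt zmax zmin xmax) {δ : ℝ} (hδ : 0 < δ)
    (hδx : δ ≤ xmax) : ∃ c > 0, ∀ j : ℤ, ∀ a ∈ Icc (j : ℝ) (xmax + j),
      ∀ b ∈ Icc (j : ℝ) (xmax + j), a + δ ≤ b → b - a + c ≤ gt b - gt a := by
  have h0 := H.strictMonoOn_sub_id 0
  simp only [Int.cast_zero, add_zero] at h0
  obtain ⟨c, hc, hinc⟩ := exists_pos_le_sub_of_strictMonoOn (H.continuous.sub continuous_id) h0
    hδ (by linarith)
  refine ⟨c, hc, fun j a ha b hb hab => ?_⟩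
  have := hinc (a - j) ⟨by linarith [ha.1], by linarith [ha.2]⟩ (b - j)
    ⟨by linarith [hb.1], by linarith [hb.2]⟩ (by linarith)
  have ea := H.sub_id_add_int (a - j) j
  have eb := H.sub_id_add_int (b - j) j
  simp only [sub_add_cancel, Pi.sub_apply, id] at ea eb this
  linarith

theorem map_mem_Icc_of_mem_addrI_two_mul (H : MarkovLift gt zmax zmin xmax) {x : ℝ} {j : ℤ}
    (hx : x ∈ addrI zmax zmin xmax (2 * j)) : gt x ∈ Icc (j : ℝ) (xmax + j) := by
  rw [addrI_two_mul] at hx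
  have hIcc : Icc (j : ℝ) (zmax + j) ⊆ Icc (j : ℝ) (xmax + j) :=
    Icc_subset_Icc le_rfl (by linarith [H.zmax_lt_zmin, H.zmin_lt_xmax])
  have hmono := (H.strictMonoOn j).monotoneOn.mono hIcc
  have hlo := hmono (left_mem_Icc.2 (hx.1.trans hx.2)) hx hx.1
  have hhi := hmono hx (right_mem_Icc.2 (hx.1.trans hx.2)) hx.2
  have hgj := H.map_add_int 0 j
  rw [zero_add] at hgj
  rw [H.map_add_int, H.map_zmax] at hhi
  exact ⟨by linarith [H.map_zero_nonneg], hhi⟩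

theorem map_mem_Icc_of_mem_addrI_two_mul_add_one (H : MarkovLift gt zmax zmin xmax) {x : ℝ}
    {j : ℤ} (hx : x ∈ addrI zmax zmin xmax (2 * j + 1)) :
    gt x ∈ Icc ((j + 1 : ℤ) : ℝ) (xmax + (j + 1 : ℤ)) := by
  rw [addrI_two_mul_add_one] at hx
  have hIcc : Icc (zmin + j : ℝ) (xmax + j) ⊆ Icc (j : ℝ) (xmax + j) :=
    Icc_subset_Icc (by linarith [H.zmax_pos, H.zmax_lt_zmin]) le_rfl
  have hmono := (H.strictMonoOn j).monotoneOn.mono hIcc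
  have hlo := hmono (left_mem_Icc.2 (hx.1.trans hx.2)) hx hx.1
  have hhi := hmono hx (right_mem_Icc.2 (hx.1.trans hx.2)) hx.2
  rw [H.map_add_int, H.map_zmin] at hlo
  rw [H.map_add_int] at hhi
  push_cast
  exact ⟨by linarith, by linarith [H.map_xmax_le]⟩

theorem transZ_of_mem_addrI (H : MarkovLift gt zmax zmin xmax) {x : ℝ} {a c : ℤ}
    (hx : x ∈ addrI zmax zmin xmax a) (hgx : gt x ∈ addrI zmax zmin xmax c) : transZ a c := by
  obtain ⟨j, rfl | rfl⟩ := Int.even_or_odd' a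
  · rcases eq_two_mul_or_of_mem_Icc H.zmax_pos H.zmax_lt_zmin H.zmin_lt_xmax H.xmax_lt_one
      (H.map_mem_Icc_of_mem_addrI_two_mul hx) hgx with rfl | rfl
    · exact Or.inl ⟨even_two_mul j, Or.inl rfl⟩
    · exact Or.inl ⟨even_two_mul j, Or.inr rfl⟩
  · rcases eq_two_mul_or_of_mem_Icc H.zmax_pos H.zmax_lt_zmin H.zmin_lt_xmax H.xmax_lt_one
      (H.map_mem_Icc_of_mem_addrI_two_mul_add_one hx) hgx with rfl | rfl
    · exact Or.inr ⟨odd_two_mul_add_one j, Or.inl (by ring)⟩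
    · exact Or.inr ⟨odd_two_mul_add_one j, Or.inr (by ring)⟩

theorem addr_eq (H : MarkovLift gt zmax zmin xmax) {x : ℝ} {m : ℤ}
    (h : x ∈ addrI zmax zmin xmax m) : addr zmax zmin xmax x = m :=
  addr_eq_of_mem_addrI H.zmax_pos H.zmax_lt_zmin H.zmin_lt_xmax H.xmax_lt_one h

theorem addrI_subset_Icc (H : MarkovLift gt zmax zmin xmax) (m : ℤ) :
    addrI zmax zmin xmax m ⊆ Icc ((m / 2 : ℤ) : ℝ) (xmax + (m / 2 : ℤ)) :=
  _root_.addrI_subset_Icc (H.zmax_lt_zmin.trans H.zmin_lt_xmax).le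
    (H.zmax_pos.trans H.zmax_lt_zmin).le m

theorem iterate_mem_addrI_itin (H : MarkovLift gt zmax zmin xmax) {x : ℝ}
    (hx : x ∈ LambdaInf gt zmax zmin xmax) (n : ℕ) :
    gt^[n] x ∈ addrI zmax zmin xmax (itin gt zmax zmin xmax x n) := by
  obtain ⟨m, hm⟩ := hx n
  rwa [itin, H.addr_eq hm]

theorem itin_add_int (H : MarkovLift gt zmax zmin xmax) {x : ℝ}
    (hx : x ∈ LambdaInf gt zmax zmin xmax) (t : ℤ) :
    itin gt zmax zmin xmax (x + t) = fun n => itin gt zmax zmin xmax x n + 2 * t := by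
  funext n
  obtain ⟨m, hm⟩ := hx n
  simp only [itin]
  rw [H.iterate_add_int, H.addr_eq (add_int_mem_addrI t hm), H.addr_eq hm]

theorem itin_mem_OmegaInf (H : MarkovLift gt zmax zmin xmax) {x : ℝ}
    (hx : x ∈ LambdaInf gt zmax zmin xmax) : itin gt zmax zmin xmax x ∈ OmegaInf := fun n =>
  H.transZ_of_mem_addrI (H.iterate_mem_addrI_itin hx n)
    (by simpa only [iterate_succ_apply'] using H.iterate_mem_addrI_itin hx (n + 1))

theorem injOn_itin (H : MarkovLift gt zmax zmin xmax) :
    InjOn (itin gt zmax zmin xmax) (LambdaInf gt zmax zmin xmax) := by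
  intro u hu v hv huv
  wlog hlt : u < v generalizing u v
  · rcases (not_lt.1 hlt).eq_or_lt with h | h
    · exact h.symm
    · exact (this hv hu huv.symm h).symm
  exfalso
  have hIcc : ∀ n, ∃ j : ℤ,
      gt^[n] u ∈ Icc (j : ℝ) (xmax + j) ∧ gt^[n] v ∈ Icc (j : ℝ) (xmax + j) :=
    fun n => ⟨_, H.addrI_subset_Icc _ (H.iterate_mem_addrI_itin hu n),
      H.addrI_subset_Icc _ (huv ▸ H.iterate_mem_addrI_itin hv n)⟩
  have hgap_le : ∀ n, gt^[n] v - gt^[n] u ≤ xmax := fun n => by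
    obtain ⟨j, hu', hv'⟩ := hIcc n
    linarith [hu'.1, hv'.2]
  obtain ⟨c, hc, hinc⟩ := H.exists_pos_add_le_sub (sub_pos.2 hlt) (hgap_le 0)
  have hgrow : ∀ n : ℕ, v - u + n * c ≤ gt^[n] v - gt^[n] u := by
    intro n
    induction n with
    | zero => simp
    | succ n ih =>
      obtain ⟨j, hu', hv'⟩ := hIcc n
      have := hinc j _ hu' _ hv' (by nlinarith [Nat.cast_nonneg (α := ℝ) n])
      rw [iterate_succ_apply', iterate_succ_apply']
      push_cast
      linarith
  obtain ⟨N, hN⟩ := exists_nat_gt (xmax / c)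
  linarith [hgrow N, hgap_le N, (div_lt_iff₀ hc).1 hN]

theorem iterate_lt_iterate_of_itin_eq (H : MarkovLift gt zmax zmin xmax) {u v : ℝ}
    (hu : u ∈ LambdaInf gt zmax zmin xmax) (hv : v ∈ LambdaInf gt zmax zmin xmax) (huv : u < v)
    {n : ℕ} (h : ∀ i < n, itin gt zmax zmin xmax u i = itin gt zmax zmin xmax v i) :
    gt^[n] u < gt^[n] v := by
  induction n with
  | zero => exact huv
  | succ n ih =>
    have hsub := H.addrI_subset_Icc (itin gt zmax zmin xmax u n)
    rw [iterate_succ_apply', iterate_succ_apply']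
    exact H.strictMonoOn _ (hsub (H.iterate_mem_addrI_itin hu n))
      (hsub (h n n.lt_succ_self ▸ H.iterate_mem_addrI_itin hv n))
      (ih fun i hi => h i (hi.trans n.lt_succ_self))

theorem strictMonoOn_itin (H : MarkovLift gt zmax zmin xmax) :
    StrictMonoOn (fun x => toLex (itin gt zmax zmin xmax x)) (LambdaInf gt zmax zmin xmax) := by
  intro u hu v hv huv
  have hne : ∃ n, itin gt zmax zmin xmax u n ≠ itin gt zmax zmin xmax v n := by
    by_contra! h
    exact huv.ne (H.injOn_itin hu hv (funext h))
  have hagree : ∀ i < Nat.find hne, itin gt zmax zmin xmax u i = itin gt zmax zmin xmax v i :=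
    fun i hi => not_not.1 (Nat.find_min hne hi)
  refine ⟨Nat.find hne, hagree, lt_of_le_of_ne ?_ (Nat.find_spec hne)⟩
  exact addr_le_addr H.zmax_pos H.zmax_lt_zmin H.zmin_lt_xmax H.xmax_lt_one
    (H.iterate_mem_addrI_itin hu _) (H.iterate_mem_addrI_itin hv _)
    (H.iterate_lt_iterate_of_itin_eq hu hv huv hagree).le

variable {k : ℕ} {gk : CircleK k → CircleK k} {ιk : CircleK k → ℕ → ℕ}
  {Z : Set (CircleK k)}

theorem projK_itin (H : MarkovLift gt zmax zmin xmax)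
    (hgk : ∀ x : ℝ, gk (mkk k x) = mkk k (gt x))
    (hιk : ∀ x ∈ LambdaK k gk zmax zmin xmax, ∀ n : ℕ,
      ιk x n < 2 * k ∧ gk^[n] x ∈ mkk k '' addrI zmax zmin xmax ((ιk x n : ℕ) : ℤ))
    {x : ℝ} (hx : mkk k x ∈ LambdaK k gk zmax zmin xmax) :
    projK k (itin gt zmax zmin xmax x) = ιk (mkk k x) := by
  funext n
  obtain ⟨hlt, w, hw, hwx⟩ := hιk _ hx n
  rw [← Semiconj.iterate_right (fun y => (hgk y).symm) n x] at hwx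
  obtain ⟨q, hq⟩ := mkk_eq_mkk_iff.1 hwx.symm
  have hitin : itin gt zmax zmin xmax x n = ιk (mkk k x) n + 2 * k * q := by
    rw [itin, H.addr_eq (hq ▸ add_int_mem_addrI _ hw)]
    ring
  rw [← Nat.cast_inj (R := ℤ), natCast_projK (by omega), hitin, Int.add_mul_emod_self_left,
    Int.emod_eq_of_lt (by positivity) (by exact_mod_cast hlt)]

theorem symbolicKfsm_image_of_physKfsmK (H : MarkovLift gt zmax zmin xmax) (hk : 1 ≤ k)
    (hgk : ∀ x : ℝ, gk (mkk k x) = mkk k (gt x))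
    (hιk : ∀ x ∈ LambdaK k gk zmax zmin xmax, ∀ n : ℕ,
      ιk x n < 2 * k ∧ gk^[n] x ∈ mkk k '' addrI zmax zmin xmax ((ιk x n : ℕ) : ℤ))
    (hZsub : Z ⊆ LambdaK k gk zmax zmin xmax) (hZ : PhysKfsmK gt k Z) :
    SymbolicKfsm k (ιk '' Z) := by
  obtain ⟨Z', hZ'gt, hZ'k, hZ'mono, rfl⟩ := hZ
  have hΛ : ∀ x ∈ Z', x ∈ LambdaInf gt zmax zmin xmax := fun x hx =>
    mem_LambdaInf_of_mkk_mem_LambdaK hgk (hZsub (mem_image_of_mem _ hx))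
  rw [symbolicKfsm_iff hk]
  refine ⟨itin gt zmax zmin xmax '' Z', ?_, ?_, ?_, ?_, ?_⟩
  · rintro _ ⟨x, hx, rfl⟩
    exact H.itin_mem_OmegaInf (hΛ x hx)
  · rintro _ ⟨x, hx, rfl⟩
    exact ⟨gt x, hZ'gt x hx, (shiftSeq_itin x).symm⟩
  · conv_rhs => rw [← hZ'k, image_image]
    rw [image_image]
    refine image_congr fun x hx => ?_
    simpa using (H.itin_add_int (hΛ x hx) k).symm
  · rintro _ ⟨x, hx, rfl⟩ _ ⟨y, hy, rfl⟩ hxy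
    rw [lexLe_iff_toLex_le] at hxy ⊢
    have hxy' := (H.strictMonoOn_itin.le_iff_le (hΛ x hx) (hΛ y hy)).1 hxy
    exact H.strictMonoOn_itin.monotoneOn (map_mem_LambdaInf (hΛ x hx))
      (map_mem_LambdaInf (hΛ y hy))
      (hxy'.eq_or_lt.elim (fun h => h ▸ le_rfl) (hZ'mono x hx y hy))
  · rw [image_image, image_image]
    exact image_congr fun x hx => H.projK_itin hgk hιk (hZsub (mem_image_of_mem _ hx))

theorem physKfsmK_of_symbolicKfsm_image (H : MarkovLift gt zmax zmin xmax) (hk : 1 ≤ k)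
    (hgk : ∀ x : ℝ, gk (mkk k x) = mkk k (gt x))
    (hιk : ∀ x ∈ LambdaK k gk zmax zmin xmax, ∀ n : ℕ,
      ιk x n < 2 * k ∧ gk^[n] x ∈ mkk k '' addrI zmax zmin xmax ((ιk x n : ℕ) : ℤ))
    (hZsub : Z ⊆ LambdaK k gk zmax zmin xmax) (hZinv : MapsTo gk Z Z)
    (hY : SymbolicKfsm k (ιk '' Z)) : PhysKfsmK gt k Z := by
  obtain ⟨W, hWΩ, hWσ, hWT, hWlex, hWZ⟩ := (symbolicKfsm_iff hk).1 hY
  have hΛ : ∀ {x}, mkk k x ∈ Z → x ∈ LambdaInf gt zmax zmin xmax := fun hx =>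
    mem_LambdaInf_of_mkk_mem_LambdaK hgk (hZsub hx)
  refine ⟨{x | mkk k x ∈ Z ∧ itin gt zmax zmin xmax x ∈ W}, ?_, ?_, ?_, ?_⟩
  · rintro x ⟨hxZ, hxW⟩
    exact ⟨hgk x ▸ hZinv hxZ, shiftSeq_itin x ▸ hWσ hxW⟩
  · ext x
    rw [image_add_right]
    simp only [mem_preimage, mem_ofPred_eq]
    have hmkk : mkk k (x + -k) = mkk k x := by
      simpa using mkk_add_int_mul (k := k) x (-1)
    rw [hmkk]
    refine and_congr_right fun hxZ => ?_
    have e : itin gt zmax zmin xmax (x + -k) =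
        itin gt zmax zmin xmax x + -fun _ : ℕ => (2 * k : ℤ) := by
      rw [show x + -(k : ℝ) = x + ((-k : ℤ) : ℝ) by push_cast; ring, H.itin_add_int (hΛ hxZ)]
      funext n
      simp only [Pi.add_apply, Pi.neg_apply]
      ring
    rw [e]
    exact add_neg_mem_iff_of_image_add_eq hWT _
  · rintro x ⟨hxZ, hxW⟩ y ⟨hyZ, hyW⟩ hxy
    have h := hWlex _ hxW _ hyW
      (lexLe_iff_toLex_le.2 (H.strictMonoOn_itin (hΛ hxZ) (hΛ hyZ) hxy).le)
    rw [lexLe_iff_toLex_le] at h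
    exact (H.strictMonoOn_itin.le_iff_le (map_mem_LambdaInf (hΛ hxZ))
      (map_mem_LambdaInf (hΛ hyZ))).1 h
  · refine (image_subset_iff.2 fun x hx => hx.1).antisymm fun z hz => ?_
    obtain ⟨x, rfl⟩ := QuotientAddGroup.mk_surjective z
    obtain ⟨s, hsW, hs⟩ : ιk (mkk k x) ∈ projK k '' W := hWZ ▸ mem_image_of_mem ιk hz
    obtain ⟨q, rfl⟩ := exists_eq_add_of_projK_eq hk (hWΩ hsW) (H.itin_mem_OmegaInf (hΛ hz))
      (hs.trans (H.projK_itin hgk hιk (hZsub hz)).symm)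
    refine ⟨x + (q * k : ℤ), ⟨?_, ?_⟩, mkk_add_int_mul x q⟩
    · rwa [mkk_add_int_mul]
    · rwa [H.itin_add_int (hΛ hz)]

end MarkovLift

/-- A g_k-invariant subset of Λ_k(g) is k-fold semi-monotone if
and only if its itinerary image is symbolic k-fold semi-monotone. -/
theorem statement9
    (g : Circle1 → Circle1) (gt : ℝ → ℝ) (xmax : ℝ) (hG : GMap g gt xmax)
    (zmax zmin : ℝ) (hz0 : 0 < zmax) (hz1 : zmax < zmin) (hz2 : zmin < xmax)
    (hzmax : gt zmax = xmax) (hzmin : gt zmin = 1)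
    (k : ℕ) (hk : 1 ≤ k)
    (gk : CircleK k → CircleK k) (hgk : ∀ x : ℝ, gk (mkk k x) = mkk k (gt x))
    (ιk : CircleK k → ℕ → ℕ)
    (hιk : ∀ x ∈ LambdaK k gk zmax zmin xmax, ∀ n : ℕ,
      ιk x n < 2 * k ∧ gk^[n] x ∈ mkk k '' addrI zmax zmin xmax ((ιk x n : ℕ) : ℤ))
    (Z : Set (CircleK k)) (hZsub : Z ⊆ LambdaK k gk zmax zmin xmax)
    (hZinv : Set.MapsTo gk Z Z) :
    PhysKfsmK gt k Z ↔ SymbolicKfsm k (ιk '' Z) := by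
  have H := hG.markovLift hz0 hz1 hz2 hzmax hzmin
  exact ⟨H.symbolicKfsm_image_of_physKfsmK hk hgk hιk hZsub,
    H.physKfsmK_of_symbolicKfsm_image hk hgk hιk hZsub hZinv⟩
end

section
/- Fix an integer k ≥ 1 and an allowable pair (p/q, ν) where p, q are positive integers with gcd(p,q) = 1 and 0 < p/q < 1. Then B_k(p/q, ν) is a finite union of periodic orbits of the left shift on Σ⁺_{2k}, each of minimal period qk/gcd(p,k); every s ∈ B_k(p/q, ν) satisfies ρ̂(π̂_k(s)) = p/q; and λ_k(p/q, ν) is a convex combination of the unique shift-invariant probability measures supported on these periodic orbits. -/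
open Set Filter Topology MeasureTheory Function
open scoped ENNReal Classical

/-!
For `ω = p/q` the rotation `R_ω` of `S_k = ℝ/kℤ` has period `N = qk/gcd(p,k)`, so every itinerary
is an `N`-periodic sequence over `2k` symbols and `B_k(ω,ν) = ζ(G)` is finite. Lifting a good orbit
`t + nω` to `[0, ∞)` and reading its address `m_n` in the lifted partition, one gets
`⌊m_{n+1}/2⌋ = ⌊m_n/2⌋ + (m_n mod 2)`: the parity bits count the blocks `X_{2j} ∪ X_{2j+1}` that
are crossed. In `N` steps the orbit makes exactly `p/gcd(p,k)` turns, i.e. crosses `k·p/gcd(p,k)`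
blocks, which gives `ρ̂ = p/q`. If the itinerary had period `d ∣ N`, the number of blocks crossed
in `d` steps would be a multiple of `k`, so `N/d` would divide `p/gcd(p,k)`, which is coprime to
`N`. Finally `λ_k` is shift invariant (Lebesgue measure is rotation invariant) and concentrated on
the finite set `B_k`, so it gives equal weight to the points of each periodic orbit.
-/

theorem Monotone.mem_Ico_of_mem_Ioo {α : Type*} [LinearOrder α] {f : ℕ → α} (hf : Monotone f)
    {y : α} {a b c : ℕ} (hb : y ∈ Ioo (f b) (f (b + 1))) (hy : y ∈ Icc (f a) (f c)) :
    b ∈ Ico a c := by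
  constructor
  · by_contra! h
    exact ((hf h).trans hy.1).not_gt hb.2
  · by_contra! h
    exact ((hf h).trans_lt hb.1).not_ge hy.2

def hmPerSum {k : ℕ} [NeZero k] (ν : Fin k → ℝ) (j : ℕ) : ℝ :=
  ∑ i ∈ Finset.range j, ν (Fin.ofNat k i)

/-- The endpoints of the address intervals, lifted to `[0, ∞)`: for `m < 2k` the interval
`X_m` is `[hmEndpoint ω ν m, hmEndpoint ω ν (m + 1)]`, and
`hmEndpoint ω ν (m + 2k) = hmEndpoint ω ν m + k`. -/
def hmEndpoint {k : ℕ} [NeZero k] (ω : ℝ) (ν : Fin k → ℝ) (m : ℕ) : ℝ :=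
  hmPerSum ν ((m + 1) / 2) + ((m / 2 : ℕ) : ℝ) * ω

section Endpoints

variable {k : ℕ} [NeZero k] {ω : ℝ} {ν : Fin k → ℝ}

theorem hmPerSum_mono (hν : ∀ i, 0 ≤ ν i) : Monotone (hmPerSum ν) := fun _ _ h =>
  Finset.sum_le_sum_of_subset_of_nonneg (Finset.range_subset_range.mpr h) fun _ _ _ => hν _

theorem hmPerSum_add_k (hνs : ∑ i, ν i = k * (1 - ω)) (j : ℕ) :
    hmPerSum ν (j + k) = hmPerSum ν j + k * (1 - ω) := by
  have hshift : ∀ i, Fin.ofNat k (k + i) = Fin.ofNat k i := fun i => by ext; simp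
  have hfull : ∑ i ∈ Finset.range k, ν (Fin.ofNat k i) = ∑ i, ν i := by
    rw [← Fin.sum_univ_eq_sum_range]; simp only [Fin.ofNat_val_eq_self]
  rw [hmPerSum, hmPerSum, add_comm j, Finset.sum_range_add, hfull, hνs]
  simp only [hshift]
  ring

theorem hmPerSum_eq_psum {j : ℕ} (hj : j ≤ k) : hmPerSum ν j = psum ν j := by
  have hfilter : (Finset.range k).filter (· < j) = Finset.range j := by
    ext i; simp only [Finset.mem_filter, Finset.mem_range]; omega
  have hrange := Fin.sum_univ_eq_sum_range (fun i => if i < j then ν (Fin.ofNat k i) else 0) k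
  simp only [Fin.ofNat_val_eq_self] at hrange
  rw [psum, hrange, ← Finset.sum_filter, hfilter, hmPerSum]

theorem hmEndpoint_zero : hmEndpoint ω ν 0 = 0 := by simp [hmEndpoint, hmPerSum]

theorem hmEndpoint_two_mul_add_two (j : ℕ) :
    hmEndpoint ω ν (2 * j + 2) = hmEndpoint ω ν (2 * j + 1) + ω := by
  simp only [hmEndpoint, show (2 * j + 2 + 1) / 2 = j + 1 by omega,
    show (2 * j + 1 + 1) / 2 = j + 1 by omega, show (2 * j + 1) / 2 = j by omega]
  push_cast; ring

theorem hmEndpoint_mono (hω : 0 ≤ ω) (hν : ∀ i, 0 ≤ ν i) : Monotone (hmEndpoint ω ν) :=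
  ((hmPerSum_mono hν).comp fun _ _ h => Nat.div_le_div_right (by omega)).add
    fun _ _ h => mul_le_mul_of_nonneg_right (Nat.cast_le.mpr (Nat.div_le_div_right h)) hω

theorem hmEndpoint_add_two_mul_k (hνs : ∑ i, ν i = k * (1 - ω)) (m c : ℕ) :
    hmEndpoint ω ν (m + 2 * k * c) = hmEndpoint ω ν m + k * c := by
  induction c with
  | zero => simp
  | succ c ih =>
    have h1 : (m + 2 * k * (c + 1) + 1) / 2 = (m + 2 * k * c + 1) / 2 + k := by
      rw [show m + 2 * k * (c + 1) + 1 = m + 2 * k * c + 1 + 2 * k by ring]; omega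
    have h2 : (m + 2 * k * (c + 1)) / 2 = (m + 2 * k * c) / 2 + k := by
      rw [show m + 2 * k * (c + 1) = m + 2 * k * c + 2 * k by ring]; omega
    simp only [hmEndpoint] at ih ⊢
    rw [h1, h2, hmPerSum_add_k hνs]
    push_cast
    linarith

theorem hmL_eq_hmEndpoint {m : ℕ} (hm : m ≤ 2 * k) : hmL ω ν m = hmEndpoint ω ν m := by
  obtain ⟨j, rfl | rfl⟩ := Nat.even_or_odd' m
  · simp [hmL, hmEndpoint, hmPerSum_eq_psum (show j ≤ k by omega),
      show (2 * j + 1) / 2 = j by omega]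
  · have hodd : ¬Even (2 * j + 1) := Nat.not_even_iff_odd.mpr (odd_two_mul_add_one j)
    simp [hmL, hmEndpoint, hodd, hmPerSum_eq_psum (show j + 1 ≤ k by omega),
      show (2 * j + 1) / 2 = j by omega, show (2 * j + 1 + 1) / 2 = j + 1 by omega]

theorem hmR_eq_hmEndpoint {m : ℕ} (hm : m < 2 * k) : hmR ω ν m = hmEndpoint ω ν (m + 1) := by
  obtain ⟨j, rfl | rfl⟩ := Nat.even_or_odd' m
  · simp [hmR, hmEndpoint, hmPerSum_eq_psum (show j + 1 ≤ k by omega),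
      show (2 * j + 1) / 2 = j by omega, show (2 * j + 1 + 1) / 2 = j + 1 by omega]
  · have hodd : ¬Even (2 * j + 1) := Nat.not_even_iff_odd.mpr (odd_two_mul_add_one j)
    simp [hmR, hmEndpoint, hodd, hmPerSum_eq_psum (show j + 1 ≤ k by omega),
      show (2 * j + 1) / 2 = j by omega, show (2 * j + 1 + 1 + 1) / 2 = j + 1 by omega,
      show (2 * j + 1 + 1) / 2 = j + 1 by omega]

theorem HMAllowable.hmEndpoint_mono (h : HMAllowable ω ν) : Monotone (hmEndpoint ω ν) :=
  _root_.hmEndpoint_mono h.1.le h.2.2.1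

theorem HMAllowable.hmEndpoint_two_mul_k (h : HMAllowable ω ν) : hmEndpoint ω ν (2 * k) = k := by
  simpa [hmEndpoint_zero] using hmEndpoint_add_two_mul_k h.2.2.2 0 1

theorem HMAllowable.exists_mem_Ioo_hmEndpoint (h : HMAllowable ω ν) {y : ℝ} (hy : 0 ≤ y)
    (havoid : ∀ m, y ≠ hmEndpoint ω ν m) :
    ∃ a, y ∈ Ioo (hmEndpoint ω ν a) (hmEndpoint ω ν (a + 1)) := by
  classical
  have hex : ∃ m, y < hmEndpoint ω ν m := by
    obtain ⟨c, hc⟩ := exists_nat_gt (y / k)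
    refine ⟨0 + 2 * k * c, ?_⟩
    rw [hmEndpoint_add_two_mul_k h.2.2.2, hmEndpoint_zero, zero_add, mul_comm]
    rwa [div_lt_iff₀ (by simp [Nat.pos_of_neZero])] at hc
  have hm0 : Nat.find hex ≠ 0 := fun h0 => by
    have := Nat.find_spec hex
    rw [h0, hmEndpoint_zero] at this
    linarith
  refine ⟨Nat.find hex - 1, lt_of_le_of_ne ?_ (havoid _).symm, ?_⟩
  · exact not_lt.mp (Nat.find_min hex (by omega))
  · rw [Nat.sub_add_cancel (Nat.pos_of_ne_zero hm0)]
    exact Nat.find_spec hex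

instance : Fact (0 < (k : ℝ)) := ⟨Nat.cast_pos.mpr (Nat.pos_of_neZero k)⟩

omit [NeZero k] in
theorem mkk_add (a b : ℝ) : mkk k a + mkk k b = mkk k (a + b) := rfl

omit [NeZero k] in
theorem continuous_mkk : Continuous (mkk k) := continuous_quotient_mk'

omit [NeZero k] in
theorem mkk_add_mul (y : ℝ) (c : ℕ) : mkk k (y + k * c) = mkk k y := by
  rw [mkk, AddCircle.coe_add, mul_comm, ← nsmul_eq_mul, AddCircle.coe_nsmul,
    AddCircle.coe_period, smul_zero, add_zero]
  rfl

theorem eq_of_mkk_eq {a b : ℝ} (ha : a ∈ Icc 0 (k : ℝ)) (hb : b ∈ Ioo 0 (k : ℝ))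
    (h : mkk k a = mkk k b) : a = b := by
  have hb' : b ∈ Ico 0 (0 + (k : ℝ)) := ⟨hb.1.le, by simpa using hb.2⟩
  rcases ha.2.lt_or_eq with ha' | rfl
  · exact (AddCircle.coe_eq_coe_iff_of_mem_Ico ⟨ha.1, by simpa using ha'⟩ hb').mp h
  · have hk : mkk k (k : ℝ) = mkk k 0 := by simpa using mkk_add_mul (k := k) 0 1
    have := (AddCircle.coe_eq_coe_iff_of_mem_Ico ⟨le_rfl, by simp [Nat.pos_of_neZero]⟩ hb').mp
      (hk.symm.trans h)
    linarith [hb.1]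

theorem HMAllowable.mkk_mem_image_hmX_iff (h : HMAllowable ω ν) {y : ℝ} {a m : ℕ}
    (hy : y ∈ Ioo (hmEndpoint ω ν a) (hmEndpoint ω ν (a + 1))) (hm : m < 2 * k) :
    mkk k y ∈ mkk k '' hmX ω ν m ↔ m = a % (2 * k) := by
  set r := a % (2 * k)
  set c := a / (2 * k)
  have hr : r < 2 * k := Nat.mod_lt _ (by simp [Nat.pos_of_neZero])
  have ha : a = r + 2 * k * c := (Nat.mod_add_div a (2 * k)).symm
  have hy' : y - k * c ∈ Ioo (hmEndpoint ω ν r) (hmEndpoint ω ν (r + 1)) := by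
    rw [ha, show r + 2 * k * c + 1 = r + 1 + 2 * k * c by ring,
      hmEndpoint_add_two_mul_k h.2.2.2, hmEndpoint_add_two_mul_k h.2.2.2] at hy
    constructor <;> linarith [hy.1, hy.2]
  have hmkk : mkk k (y - k * c) = mkk k y := by
    simpa using (mkk_add_mul (k := k) (y - k * c) c).symm
  have hX : hmX ω ν m = Icc (hmEndpoint ω ν m) (hmEndpoint ω ν (m + 1)) := by
    rw [hmX, hmL_eq_hmEndpoint hm.le, hmR_eq_hmEndpoint hm]
  have hmono := h.hmEndpoint_mono
  constructor
  · rintro ⟨z, hz, hzy⟩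
    rw [hX] at hz
    have hz0 : z ∈ Icc 0 (k : ℝ) :=
      ⟨hmEndpoint_zero (ω := ω) (ν := ν) ▸ (hmono (Nat.zero_le m)).trans hz.1,
        h.hmEndpoint_two_mul_k ▸ hz.2.trans (hmono (by omega))⟩
    have hy0 : y - k * c ∈ Ioo 0 (k : ℝ) :=
      ⟨hmEndpoint_zero (ω := ω) (ν := ν) ▸ (hmono (Nat.zero_le r)).trans_lt hy'.1,
        h.hmEndpoint_two_mul_k ▸ hy'.2.trans_le (hmono (by omega))⟩
    have hzeq := eq_of_mkk_eq hz0 hy0 (hzy.trans hmkk.symm)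
    have := hmono.mem_Ico_of_mem_Ioo hy' (hzeq ▸ hz)
    exact (Nat.eq_of_le_of_lt_succ this.1 this.2).symm
  · rintro rfl
    exact ⟨y - k * c, hX ▸ Ioo_subset_Icc_self hy', hmkk⟩

theorem HMAllowable.hmAddr_mkk (h : HMAllowable ω ν) {y : ℝ} {a : ℕ}
    (hy : y ∈ Ioo (hmEndpoint ω ν a) (hmEndpoint ω ν (a + 1))) :
    hmAddr k ω ν (mkk k y) = a % (2 * k) := by
  have hlt : ∀ n, n % (2 * k) < 2 * k := fun n => Nat.mod_lt _ (by simp [Nat.pos_of_neZero])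
  have hex : ∃ m, m < 2 * k ∧ mkk k y ∈ mkk k '' hmX ω ν m :=
    ⟨a % (2 * k), hlt a, (h.mkk_mem_image_hmX_iff hy (hlt a)).mpr rfl⟩
  rw [hmAddr, dif_pos hex]
  exact (h.mkk_mem_image_hmX_iff hy hex.choose_spec.1).mp hex.choose_spec.2

end Endpoints

theorem shiftSeq_iterate_apply {α : Type*} (s : ℕ → α) (n i : ℕ) :
    shiftSeq^[n] s i = s (i + n) := by
  induction n generalizing s with
  | zero => rfl
  | succ n ih => rw [Function.iterate_succ_apply, ih]; rfl

/-- `A n / 2` is the index of the block `X_{2j} ∪ X_{2j+1}` containing the `n`-th point. If the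
symbols `A n % 2k` have period `d`, the block index grows by the same amount `S` every `d` steps,
and `S` is a multiple of `k` because the point is back in the same symbol; comparing with the
growth `k c` over `N` steps gives `(N / d) * (S / k) = c`. -/
theorem div_dvd_of_periodic_mod {A : ℕ → ℕ} {k N c d : ℕ} (hk : 0 < k)
    (hstep : ∀ n, A (n + 1) / 2 = A n / 2 + A n % 2) (hN : ∀ n, A (n + N) = A n + 2 * (k * c))
    (hdN : d ∣ N) (hd : ∀ n, A (n + d) % (2 * k) = A n % (2 * k)) : N / d ∣ c := by
  have hpar : ∀ n, A (n + d) % 2 = A n % 2 := fun n => by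
    rw [← Nat.mod_mod_of_dvd _ (dvd_mul_right 2 k), hd, Nat.mod_mod_of_dvd _ (dvd_mul_right 2 k)]
  have hmono : ∀ n, A 0 / 2 ≤ A n / 2 := fun n => by
    induction n with
    | zero => rfl
    | succ n ih => rw [hstep]; omega
  obtain ⟨S, hS⟩ := Nat.exists_eq_add_of_le (hmono d)
  have hshift : ∀ n, A (n + d) / 2 = A n / 2 + S := fun n => by
    induction n with
    | zero => simpa using hS
    | succ n ih => rw [show n + 1 + d = n + d + 1 by omega, hstep, ih, hstep, hpar]; ring
  have hmul : ∀ m, A (m * d) / 2 = A 0 / 2 + m * S := fun m => by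
    induction m with
    | zero => simp
    | succ m ih => rw [add_mul, one_mul, hshift, ih]; ring
  have hNS : N / d * S = k * c := by
    have h1 := hmul (N / d)
    have h2 := hN 0
    rw [Nat.div_mul_cancel hdN] at h1
    rw [zero_add] at h2
    omega
  have hkS : k ∣ S := by
    have h1 : A d = A 0 + 2 * S := by
      have := hpar 0
      rw [zero_add] at this
      omega
    have h2 : A 0 + 2 * S ≡ A 0 + 0 [MOD 2 * k] := by
      unfold Nat.ModEq; rw [add_zero, ← h1]; simpa using hd 0
    exact Nat.dvd_of_mul_dvd_mul_left two_pos
      (Nat.modEq_zero_iff_dvd.mp (Nat.ModEq.add_left_cancel' _ h2))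
  obtain ⟨w, rfl⟩ := hkS
  exact ⟨w, Nat.eq_of_mul_eq_mul_left hk (by rw [← hNS]; ring)⟩

theorem tendsto_div_of_add_period {s : ℕ → ℝ} {N : ℕ} (hN : 0 < N) {K : ℝ}
    (hs : ∀ n, s (n + N) = s n + K) :
    Tendsto (fun n : ℕ => s n / n) atTop (𝓝 (K / N)) := by
  set f : ℕ → ℝ := fun n => s n - n * (K / N)
  have hNR : (N : ℝ) ≠ 0 := by exact_mod_cast hN.ne'
  have hf : Function.Periodic f N := fun n => by
    simp only [f, hs]; push_cast; field_simp; ring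
  have hbound : ∀ n, |f n| ≤ ∑ i ∈ Finset.range N, |f i| := fun n => by
    rw [← hf.map_mod_nat n]
    exact Finset.single_le_sum (fun i _ => abs_nonneg (f i))
      (Finset.mem_range.mpr (Nat.mod_lt n hN))
  have hsmall : Tendsto (fun n : ℕ => f n / n) atTop (𝓝 0) := by
    refine squeeze_zero_norm (fun n => ?_)
      (tendsto_const_div_atTop_nhds_zero_nat (∑ i ∈ Finset.range N, |f i|))
    rw [Real.norm_eq_abs, abs_div, Nat.abs_cast]
    exact div_le_div_of_nonneg_right (hbound n) (Nat.cast_nonneg n)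
  have hlim := hsmall.const_add (K / N)
  rw [add_zero] at hlim
  refine hlim.congr' ?_
  filter_upwards [Filter.eventually_ne_atTop 0] with n hn
  have : (n : ℝ) ≠ 0 := by exact_mod_cast hn
  simp only [f]
  field_simp
  ring

section Itinerary

variable {k : ℕ} [NeZero k] {ω : ℝ} {ν : Fin k → ℝ}

omit [NeZero k] in
theorem rotK_iterate_apply (x : CircleK k) (n : ℕ) :
    (RotK k ω)^[n] x = x + mkk k (n * ω) := by
  induction n with
  | zero => simp [mkk]
  | succ n ih =>
    rw [Function.iterate_succ_apply', ih, RotK, add_assoc, mkk_add]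
    push_cast; ring_nf

/-- `A n` is the address of `t + nω` in the partition of `[0, ∞)` cut out by `hmEndpoint`; it
records the symbol `A n % 2k` together with the number `A n / 2k` of turns around `S_k`. -/
def IsLiftedItinerary (ω : ℝ) (ν : Fin k → ℝ) (t : ℝ) (A : ℕ → ℕ) : Prop :=
  ∀ n, t + n * ω ∈ Ioo (hmEndpoint ω ν (A n)) (hmEndpoint ω ν (A n + 1))

theorem HMAllowable.exists_isLiftedItinerary (h : HMAllowable ω ν) {x : CircleK k}
    (hx : x ∈ hmGood k ω ν) {t : ℝ} (ht : 0 ≤ t) (hxt : mkk k t = x) :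
    ∃ A, IsLiftedItinerary ω ν t A ∧ ∀ n, hmZeta k ω ν x n = A n % (2 * k) := by
  have hpos : ∀ n : ℕ, 0 ≤ t + n * ω := fun n => by have := h.1; positivity
  have havoid : ∀ (n : ℕ) m, t + n * ω ≠ hmEndpoint ω ν m := by
    intro n m heq
    have hm : m % (2 * k) < 2 * k := Nat.mod_lt _ (by simp [Nat.pos_of_neZero])
    have hm' : hmEndpoint ω ν m = hmEndpoint ω ν (m % (2 * k)) + k * (m / (2 * k) : ℕ) := by
      conv_lhs => rw [← Nat.mod_add_div m (2 * k)]
      exact hmEndpoint_add_two_mul_k h.2.2.2 _ _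
    apply (hx n _ hm).1
    rw [← hxt, rotK_iterate_apply, mkk_add, heq, hm', mkk_add_mul, hmL_eq_hmEndpoint hm.le]
  choose A hA using fun n => h.exists_mem_Ioo_hmEndpoint (hpos n) (havoid n)
  exact ⟨A, hA, fun n => by rw [hmZeta, ← hxt, rotK_iterate_apply, mkk_add, h.hmAddr_mkk (hA n)]⟩

theorem IsLiftedItinerary.div_two_succ (h : HMAllowable ω ν) {t : ℝ} {A : ℕ → ℕ}
    (hA : IsLiftedItinerary ω ν t A) (n : ℕ) : A (n + 1) / 2 = A n / 2 + A n % 2 := by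
  have hy := hA n
  have hy' := hA (n + 1)
  rw [show t + ((n + 1 : ℕ) : ℝ) * ω = t + n * ω + ω by push_cast; ring] at hy'
  have hmono := h.hmEndpoint_mono
  obtain ⟨j, hj | hj⟩ := Nat.even_or_odd' (A n)
  · rw [hj] at hy
    have := hmono.mem_Ico_of_mem_Ioo hy' (a := 2 * j) (c := 2 * j + 2)
      ⟨by linarith [hy.1, h.1], by linarith [hy.2, hmEndpoint_two_mul_add_two (ω := ω) (ν := ν) j]⟩
    rw [Set.mem_Ico] at this
    omega
  · rw [hj] at hy
    have h1 := hmEndpoint_two_mul_add_two (ω := ω) (ν := ν) j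
    have h2 := hmEndpoint_two_mul_add_two (ω := ω) (ν := ν) (j + 1)
    have h3 := hmono (show 2 * j + 2 ≤ 2 * (j + 1) + 1 by omega)
    have := hmono.mem_Ico_of_mem_Ioo hy' (a := 2 * j + 2) (c := 2 * j + 4)
      ⟨by linarith [hy.1], by rw [show 2 * j + 4 = 2 * (j + 1) + 2 by ring]; linarith [hy.2]⟩
    rw [Set.mem_Ico] at this
    omega

theorem IsLiftedItinerary.add_period (h : HMAllowable ω ν) {t : ℝ} {A : ℕ → ℕ}
    (hA : IsLiftedItinerary ω ν t A) {N c : ℕ} (hNω : N * ω = k * c) (n : ℕ) :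
    A (n + N) = A n + 2 * k * c := by
  have hy := hA n
  have hy' := hA (n + N)
  have h0 := hmEndpoint_add_two_mul_k h.2.2.2 (A n) c
  have h1 := hmEndpoint_add_two_mul_k h.2.2.2 (A n + 1) c
  rw [show A n + 1 + 2 * k * c = A n + 2 * k * c + 1 by ring] at h1
  have := h.hmEndpoint_mono.mem_Ico_of_mem_Ioo hy' (a := A n + 2 * k * c) (c := A n + 2 * k * c + 1)
    ⟨by push_cast; linarith [hy.1], by push_cast; linarith [hy.2]⟩
  exact Nat.eq_of_le_of_lt_succ this.1 this.2

end Itinerary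

theorem finite_setOf_periodic_lt {N : ℕ} (hN : 0 < N) (B : ℕ) :
    {s : ℕ → ℕ | Function.Periodic s N ∧ ∀ n, s n < B}.Finite := by
  refine (finite_range fun f : Fin N → Fin B => fun n => (f ⟨n % N, Nat.mod_lt n hN⟩ : ℕ)).subset ?_
  rintro s ⟨hper, hB⟩
  exact ⟨fun i => ⟨s i, hB i⟩, funext hper.map_mod_nat⟩

section Rational

variable {k : ℕ} [NeZero k] {ν : Fin k → ℝ} {p q : ℕ}

omit [NeZero k] in
theorem HMAllowable.denom_ne_zero (h : HMAllowable ((p : ℝ) / q) ν) : q ≠ 0 := by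
  rintro rfl
  simpa using h.1

theorem HMAllowable.period_pos (h : HMAllowable ((p : ℝ) / q) ν) : 0 < q * k / p.gcd k :=
  Nat.div_pos (Nat.le_of_dvd (Nat.mul_pos (Nat.pos_of_ne_zero h.denom_ne_zero) (NeZero.pos k))
    (dvd_mul_of_dvd_right (Nat.gcd_dvd_right p k) q)) (Nat.gcd_pos_of_pos_right p (NeZero.pos k))

omit [NeZero k] in
theorem natCast_period_mul (hq : q ≠ 0) (hk : k ≠ 0) :
    ((q * k / p.gcd k : ℕ) : ℝ) * (p / q) = k * (p / p.gcd k : ℕ) := by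
  have hg : (p.gcd k : ℝ) ≠ 0 := by
    exact_mod_cast (Nat.gcd_pos_of_pos_right p (Nat.pos_of_ne_zero hk)).ne'
  rw [Nat.cast_div (dvd_mul_of_dvd_right (Nat.gcd_dvd_right p k) q) hg,
    Nat.cast_div (Nat.gcd_dvd_left p k) hg]
  field_simp
  push_cast
  ring

/-- The orbit makes `p/gcd(p,k)` turns around `S_k` in `qk/gcd(p,k)` steps, since
`(qk/gcd(p,k)) · p/q = k · p/gcd(p,k)`. -/
theorem HMAllowable.exists_lifted_periodic (h : HMAllowable ((p : ℝ) / q) ν) {x : CircleK k}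
    (hx : x ∈ hmGood k ((p : ℝ) / q) ν) :
    ∃ A : ℕ → ℕ, (∀ n, hmZeta k ((p : ℝ) / q) ν x n = A n % (2 * k)) ∧
      (∀ n, A (n + 1) / 2 = A n / 2 + A n % 2) ∧
      ∀ n, A (n + q * k / p.gcd k) = A n + 2 * (k * (p / p.gcd k)) := by
  obtain ⟨t, ht, hxt⟩ := AddCircle.eq_coe_Ico x
  obtain ⟨A, hA, hζ⟩ := h.exists_isLiftedItinerary hx ht.1 hxt
  refine ⟨A, hζ, hA.div_two_succ h, fun n => ?_⟩
  rw [hA.add_period h (natCast_period_mul h.denom_ne_zero (NeZero.ne k)) n]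
  ring

theorem HMAllowable.minimalPeriod_hmZeta (hcop : p.Coprime q) (h : HMAllowable ((p : ℝ) / q) ν)
    {x : CircleK k} (hx : x ∈ hmGood k ((p : ℝ) / q) ν) :
    minimalPeriod shiftSeq (hmZeta k ((p : ℝ) / q) ν x) = q * k / p.gcd k := by
  obtain ⟨A, hζ, hstep, hper⟩ := h.exists_lifted_periodic hx
  have hperiodic : IsPeriodicPt shiftSeq (q * k / p.gcd k) (hmZeta k _ ν x) :=
    funext fun i => by
      rw [shiftSeq_iterate_apply, hζ, hζ, hper, ← mul_assoc, Nat.add_mul_mod_self_left]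
  have hdN := hperiodic.minimalPeriod_dvd
  have hd : ∀ n, A (n + minimalPeriod shiftSeq (hmZeta k _ ν x)) % (2 * k) =
      A n % (2 * k) := fun n => by
    rw [← hζ, ← hζ, ← shiftSeq_iterate_apply (hmZeta k _ ν x),
      (Function.isPeriodicPt_minimalPeriod _ _).eq]
  have hcopN : (p / p.gcd k).Coprime (q * k / p.gcd k) := by
    rw [Nat.mul_div_assoc q (Nat.gcd_dvd_right p k)]
    exact (Nat.Coprime.coprime_dvd_left (Nat.div_dvd_of_dvd (Nat.gcd_dvd_left p k)) hcop).mul_right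
      (Nat.coprime_div_gcd_div_gcd (Nat.gcd_pos_of_pos_right p (NeZero.pos k)))
  exact Nat.eq_of_dvd_of_div_eq_one hdN (Nat.eq_one_of_dvd_coprimes hcopN
    (div_dvd_of_periodic_mod (NeZero.pos k) hstep hper hdN hd) (Nat.div_dvd_of_dvd hdN))

theorem HMAllowable.symbRot_hmZeta (h : HMAllowable ((p : ℝ) / q) ν) {x : CircleK k}
    (hx : x ∈ hmGood k ((p : ℝ) / q) ν) : symbRot (hmZeta k ((p : ℝ) / q) ν x) ((p : ℝ) / q) := by
  obtain ⟨A, hζ, hstep, hper⟩ := h.exists_lifted_periodic hx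
  have hsum : ∀ n, A n / 2 = A 0 / 2 + ∑ i ∈ Finset.range n, A i % 2 := fun n => by
    induction n with
    | zero => simp
    | succ n ih => rw [hstep, ih, Finset.sum_range_succ, add_assoc]
  set s : ℕ → ℝ := fun n => ∑ i ∈ Finset.range n, ((A i % 2 : ℕ) : ℝ)
  have hs : ∀ n, s (n + q * k / p.gcd k) = s n + (k * (p / p.gcd k) : ℕ) := fun n => by
    have h1 := hsum (n + q * k / p.gcd k)
    have h2 := hsum n
    rw [hper] at h1
    simp only [s]
    exact_mod_cast (show ∑ i ∈ Finset.range (n + q * k / p.gcd k), A i % 2 =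
      ∑ i ∈ Finset.range n, A i % 2 + k * (p / p.gcd k) by omega)
  have hK : ((k * (p / p.gcd k) : ℕ) : ℝ) / (q * k / p.gcd k : ℕ) = p / q := by
    rw [div_eq_iff (by exact_mod_cast h.period_pos.ne'), Nat.cast_mul, mul_comm ((p : ℝ) / q),
      natCast_period_mul h.denom_ne_zero (NeZero.ne k)]
  have hlim := (Filter.tendsto_add_atTop_iff_nat 1).mpr (tendsto_div_of_add_period h.period_pos hs)
  rw [hK] at hlim
  refine hlim.congr fun n => ?_
  simp only [s, hζ, Nat.mod_mod_of_dvd _ (dvd_mul_right 2 k)]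
  push_cast
  rfl

end Rational

section Orbits

variable {X : Type*} {f : X → X}

theorem fwdOrbit_subset_of_mem {y z : X} (hy : y ∈ fwdOrbit f z) :
    fwdOrbit f y ⊆ fwdOrbit f z := by
  obtain ⟨a, rfl⟩ := hy
  rintro _ ⟨m, rfl⟩
  exact ⟨m + a, Function.iterate_add_apply f m a z⟩

theorem fwdOrbit_eq_of_mem {y z : X} (hz : z ∈ periodicPts f) (hy : y ∈ fwdOrbit f z) :
    fwdOrbit f y = fwdOrbit f z := by
  obtain ⟨n, hn, hper⟩ := hz
  obtain ⟨a, rfl⟩ := hy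
  refine (fwdOrbit_subset_of_mem ⟨a, rfl⟩).antisymm (fwdOrbit_subset_of_mem ⟨n * a - a, ?_⟩)
  show f^[n * a - a] (f^[a] z) = z
  rw [← Function.iterate_add_apply, Nat.sub_add_cancel (Nat.le_mul_of_pos_left a hn),
    (hper.mul_const a).eq]

theorem exists_fin_fwdOrbit_partition {Z : Set X} (hZ : Z.Finite) (hne : Z.Nonempty)
    (hmaps : Set.MapsTo f Z Z) (hper : Z ⊆ periodicPts f) :
    ∃ r, 0 < r ∧ ∃ s : Fin r → X, (∀ j, s j ∈ Z) ∧
      Pairwise (onFun Disjoint fun j => fwdOrbit f (s j)) ∧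
      Z = ⋃ j, fwdOrbit f (s j) := by
  obtain ⟨r, e, he⟩ := (hZ.image (fwdOrbit f)).fin_embedding
  have hmem : ∀ {z}, z ∈ Z → fwdOrbit f z ∈ Set.range e := fun hz => he ▸ Set.mem_image_of_mem _ hz
  choose s hsZ hse using fun j => (he ▸ Set.mem_range_self j : e j ∈ fwdOrbit f '' Z)
  refine ⟨r, ?_, s, hsZ, fun i j hij => ?_, ?_⟩
  · obtain ⟨j, -⟩ := hmem hne.some_mem
    exact j.pos
  · rw [onFun, Set.disjoint_iff_forall_ne]
    rintro w hwi _ hwj rfl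
    apply hij
    apply e.injective
    rw [← hse, ← hse, ← fwdOrbit_eq_of_mem (hper (hsZ i)) hwi,
      fwdOrbit_eq_of_mem (hper (hsZ j)) hwj]
  · refine Set.Subset.antisymm (fun z hz => ?_) (Set.iUnion_subset fun j => ?_)
    · obtain ⟨j, hj⟩ := hmem hz
      exact Set.mem_iUnion.mpr ⟨j, (hse j).symm ▸ hj ▸ ⟨0, rfl⟩⟩
    · rintro _ ⟨n, rfl⟩
      exact hmaps.iterate n (hsZ j)

variable [MeasurableSpace X] [MeasurableSingletonClass X]

theorem measure_singleton_iterate {μ : Measure X} (hf : Measurable f) (hinv : μ.map f = μ)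
    {z : X} {N : ℕ} (hN : 0 < N) (hz : IsPeriodicPt f N z) (i : ℕ) :
    μ {f^[i] z} = μ {z} := by
  have hstep : ∀ y, μ {y} ≤ μ {f y} := fun y => by
    conv_rhs => rw [← hinv, Measure.map_apply hf (measurableSet_singleton _)]
    exact measure_mono fun w hw => by rw [Set.mem_singleton_iff.mp hw]; rfl
  have hchain : ∀ j y, μ {y} ≤ μ {f^[j] y} := fun j => by
    induction j with
    | zero => exact fun y => le_rfl
    | succ j ih => exact fun y => (ih y).trans (by rw [Function.iterate_succ_apply']; exact hstep _)
  refine le_antisymm ?_ (hchain i z)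
  calc μ {f^[i] z} ≤ μ {f^[N * i - i] (f^[i] z)} := hchain _ _
    _ = μ {z} := by
      rw [← Function.iterate_add_apply, Nat.sub_add_cancel (Nat.le_mul_of_pos_left i hN),
        (hz.mul_const i).eq]

end Orbits

theorem measurable_shiftSeq {α : Type*} [MeasurableSpace α] :
    Measurable (shiftSeq : (ℕ → α) → ℕ → α) :=
  measurable_pi_lambda _ fun n => measurable_pi_apply (n + 1)

theorem orbitMeasure_univ (s : ℕ → ℕ) {N : ℕ} (hN : 0 < N) : orbitMeasure s N Set.univ = 1 := by
  simp [orbitMeasure,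
    ENNReal.inv_mul_cancel (Nat.cast_ne_zero.mpr hN.ne') (ENNReal.natCast_ne_top N)]

theorem restrict_fwdOrbit_shiftSeq {μ : Measure (ℕ → ℕ)} (hinv : μ.map shiftSeq = μ)
    {s : ℕ → ℕ} {N : ℕ} (hN : 0 < N) (hs : minimalPeriod shiftSeq s = N) :
    μ.restrict (fwdOrbit shiftSeq s) = (N * μ {s}) • orbitMeasure s N := by
  have horbit : fwdOrbit shiftSeq s = ⋃ i ∈ Finset.range N, {shiftSeq^[i] s} := by
    ext w
    simp only [fwdOrbit, Set.mem_range, Set.mem_iUnion, Set.mem_singleton_iff, Finset.mem_range,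
      exists_prop]
    constructor
    · rintro ⟨n, rfl⟩
      exact ⟨n % N, Nat.mod_lt n hN, by rw [← hs, Function.iterate_mod_minimalPeriod_eq]⟩
    · rintro ⟨i, -, rfl⟩
      exact ⟨i, rfl⟩
  have hperiodic : IsPeriodicPt shiftSeq N s := hs ▸ Function.isPeriodicPt_minimalPeriod _ _
  have hdisj : (Finset.range N : Set ℕ).Pairwise (onFun Disjoint fun i => {shiftSeq^[i] s}) :=
    fun i hi j hj hij => Set.disjoint_singleton.mpr fun heq =>
      hij (Function.iterate_injOn_Iio_minimalPeriod (hs ▸ Finset.mem_range.mp hi)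
        (hs ▸ Finset.mem_range.mp hj) heq)
  rw [horbit, Measure.restrict_biUnion_finset hdisj fun _ => measurableSet_singleton _,
    Measure.sum_fintype, Finset.sum_coe_sort (Finset.range N) fun i => μ.restrict {shiftSeq^[i] s}]
  simp only [Measure.restrict_singleton,
    measure_singleton_iterate measurable_shiftSeq hinv hN hperiodic, orbitMeasure, smul_smul,
    ← Finset.smul_sum]
  rw [mul_comm (N : ℝ≥0∞), mul_assoc,
    ENNReal.mul_inv_cancel (Nat.cast_ne_zero.mpr hN.ne') (ENNReal.natCast_ne_top N), mul_one]

theorem exists_eq_sum_orbitMeasure {Z : Set (ℕ → ℕ)} (hZ : Z.Finite) (hmaps : MapsTo shiftSeq Z Z)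
    {N : ℕ} (hN : 0 < N) (hper : ∀ z ∈ Z, minimalPeriod shiftSeq z = N)
    (μ : Measure (ℕ → ℕ)) [IsProbabilityMeasure μ] (hinv : μ.map shiftSeq = μ) (hμZ : μ Zᶜ = 0) :
    ∃ r : ℕ, 0 < r ∧ ∃ s : Fin r → (ℕ → ℕ),
      Pairwise (onFun Disjoint fun j => fwdOrbit shiftSeq (s j)) ∧
      Z = ⋃ j, fwdOrbit shiftSeq (s j) ∧
      (∀ j, minimalPeriod shiftSeq (s j) = N) ∧
      ∃ c : Fin r → ℝ≥0∞, ∑ j, c j = 1 ∧ μ = ∑ j, c j • orbitMeasure (s j) N := by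
  have hne : Z.Nonempty := Set.nonempty_iff_ne_empty.mpr fun hZ0 => by
    simp [hZ0] at hμZ
  obtain ⟨r, hr, s, hsZ, hdisj, hunion⟩ := exists_fin_fwdOrbit_partition hZ hne hmaps
    fun z hz => minimalPeriod_pos_iff_mem_periodicPts.mp (hper z hz ▸ hN)
  have hμ : μ = ∑ j, (N * μ {s j}) • orbitMeasure (s j) N := calc
    μ = μ.restrict Z := (Measure.restrict_eq_self_of_ae_mem (ae_iff.mpr hμZ)).symm
    _ = ∑ j, μ.restrict (fwdOrbit shiftSeq (s j)) := by
      rw [hunion, Measure.restrict_iUnion hdisj fun j =>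
          (hZ.subset (hunion ▸ subset_iUnion (fun j => fwdOrbit shiftSeq (s j)) j)).measurableSet,
        Measure.sum_fintype]
    _ = _ := Finset.sum_congr rfl fun j _ => restrict_fwdOrbit_shiftSeq hinv hN (hper _ (hsZ j))
  refine ⟨r, hr, s, hdisj, hunion, fun j => hper _ (hsZ j), _, ?_, hμ⟩
  have := congrArg (fun ν : Measure (ℕ → ℕ) => ν Set.univ) hμ
  simpa [Measure.coe_finsetSum, orbitMeasure_univ _ hN] using this.symm

section Measure

variable {k : ℕ} [NeZero k] {ω : ℝ} {ν : Fin k → ℝ}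

instance {T : ℝ} [Fact (0 < T)] : NullSingletonClass (volume : Measure (AddCircle T)) :=
  ⟨fun x => by simpa using AddCircle.volume_closedBall T (x := x) 0⟩

theorem HMAllowable.hmAddr_eq_iff (h : HMAllowable ω ν) {x : CircleK k}
    (hx : x ∉ (fun m => mkk k (hmEndpoint ω ν m)) '' Iio (2 * k)) (m : ℕ) :
    hmAddr k ω ν x = m ↔ m < 2 * k ∧ x ∈ mkk k '' hmX ω ν m := by
  obtain ⟨t, ht, rfl⟩ := AddCircle.eq_coe_Ico x
  have havoid : ∀ i, t ≠ hmEndpoint ω ν i := by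
    rintro i rfl
    rcases lt_or_ge i (2 * k) with hi | hi
    · exact hx ⟨i, hi, rfl⟩
    · have := h.hmEndpoint_two_mul_k ▸ h.hmEndpoint_mono hi
      linarith [ht.2]
  obtain ⟨a, ha⟩ := h.exists_mem_Ioo_hmEndpoint ht.1 havoid
  have hlt : a % (2 * k) < 2 * k := Nat.mod_lt _ (by simp [Nat.pos_of_neZero])
  change hmAddr k ω ν (mkk k t) = m ↔ m < 2 * k ∧ mkk k t ∈ mkk k '' hmX ω ν m
  rw [h.hmAddr_mkk ha]
  constructor
  · rintro rfl
    exact ⟨hlt, (h.mkk_mem_image_hmX_iff ha hlt).mpr rfl⟩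
  · rintro ⟨hm, hmem⟩
    exact ((h.mkk_mem_image_hmX_iff ha hm).mp hmem).symm

theorem HMAllowable.measurable_hmAddr (h : HMAllowable ω ν) : Measurable (hmAddr k ω ν) := by
  set E := (fun m => mkk k (hmEndpoint ω ν m)) '' Iio (2 * k)
  have hE : E.Finite := (finite_Iio _).image _
  refine measurable_to_countable' fun m => ?_
  have hdiff : hmAddr k ω ν ⁻¹' {m} \ E = ({_x | m < 2 * k} ∩ mkk k '' hmX ω ν m) \ E := by
    ext x
    simp only [Set.mem_sdiff, mem_preimage, mem_singleton_iff, mem_inter_iff, mem_ofPred_eq]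
    exact and_congr_left fun hx => h.hmAddr_eq_iff hx m
  rw [← inter_union_sdiff (hmAddr k ω ν ⁻¹' {m}) E, hdiff]
  have hX : MeasurableSet (mkk k '' hmX ω ν m) :=
    (isCompact_Icc.image continuous_mkk).isClosed.measurableSet
  exact (hE.subset inter_subset_right).measurableSet.union
    (((MeasurableSet.const _).inter hX).diff hE.measurableSet)

theorem HMAllowable.measurable_hmZeta (h : HMAllowable ω ν) : Measurable (hmZeta k ω ν) :=
  measurable_pi_lambda _ fun n => h.measurable_hmAddr.comp ((measurable_add_const _).iterate n)

theorem volume_hmGood_compl : volume (hmGood k ω ν)ᶜ = 0 := by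
  refine ((Set.countable_range fun z : ℕ × ℕ × Bool =>
    (if z.2.2 then mkk k (hmL ω ν z.2.1) else mkk k (hmR ω ν z.2.1)) - mkk k (z.1 * ω)).mono
      ?_).measure_zero volume
  intro x hx
  simp only [hmGood, Set.mem_compl_iff, Set.mem_ofPred_eq, not_forall] at hx
  obtain ⟨n, m, -, hnot⟩ := hx
  rw [rotK_iterate_apply] at hnot
  rcases not_and_or.mp hnot with hL | hR
  · exact ⟨(n, m, true), by simp [← not_not.mp hL]⟩
  · exact ⟨(n, m, false), by simp [← not_not.mp hR]⟩

theorem map_mkk_volume : (volume.restrict (Ico (0 : ℝ) k)).map (mkk k) = volume := by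
  have h := (AddCircle.measurePreserving_mk (k : ℝ) 0).map_eq
  rw [zero_add] at h
  rw [Measure.restrict_congr_set Ico_ae_eq_Ioc]
  exact h

theorem hmLambda_eq_map : hmLambda k ω ν = (k : ℝ≥0∞)⁻¹ • volume.map (hmZeta k ω ν) := by
  rw [hmLambda, map_mkk_volume, Measure.restrict_eq_self_of_ae_mem (ae_iff.mpr volume_hmGood_compl)]

omit [NeZero k] in
theorem hmZeta_rotK (x : CircleK k) :
    hmZeta k ω ν (RotK k ω x) = shiftSeq (hmZeta k ω ν x) :=
  funext fun n => by simp only [hmZeta, shiftSeq, Function.iterate_succ_apply]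

theorem HMAllowable.isProbabilityMeasure_hmLambda (h : HMAllowable ω ν) :
    IsProbabilityMeasure (hmLambda k ω ν) := ⟨by
  rw [hmLambda_eq_map, Measure.smul_apply, Measure.map_apply h.measurable_hmZeta MeasurableSet.univ,
    Set.preimage_univ, AddCircle.measure_univ, ENNReal.ofReal_natCast, smul_eq_mul,
    ENNReal.inv_mul_cancel (Nat.cast_ne_zero.mpr (NeZero.ne k)) (ENNReal.natCast_ne_top k)]⟩

theorem HMAllowable.map_shiftSeq_hmLambda (h : HMAllowable ω ν) :
    (hmLambda k ω ν).map shiftSeq = hmLambda k ω ν := by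
  have hcomm : shiftSeq ∘ hmZeta k ω ν = hmZeta k ω ν ∘ fun x => x + mkk k ω :=
    funext fun x => (hmZeta_rotK x).symm
  rw [hmLambda_eq_map, Measure.map_smul, Measure.map_map measurable_shiftSeq h.measurable_hmZeta,
    hcomm, ← Measure.map_map h.measurable_hmZeta (measurable_add_const _), map_add_right_eq_self]

theorem HMAllowable.hmLambda_compl_hmB (h : HMAllowable ω ν) :
    hmLambda k ω ν (hmB k ω ν)ᶜ = 0 := by
  have hsub : hmZeta k ω ν ⁻¹' (hmB k ω ν)ᶜ ⊆ (hmGood k ω ν)ᶜ :=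
    fun x hx hxG => hx (subset_closure ⟨x, hxG, rfl⟩)
  rw [hmLambda_eq_map, Measure.smul_apply,
    Measure.map_apply h.measurable_hmZeta
      (show IsClosed (hmB k ω ν) from isClosed_closure).isOpen_compl.measurableSet,
    measure_mono_null hsub volume_hmGood_compl, smul_zero]

end Measure

section Image

variable {k : ℕ} {ω : ℝ} {ν : Fin k → ℝ}

theorem rotK_mem_hmGood {x : CircleK k} (hx : x ∈ hmGood k ω ν) : RotK k ω x ∈ hmGood k ω ν :=
  fun n m hm => by simpa only [← Function.iterate_succ_apply] using hx (n + 1) m hm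

theorem mapsTo_shiftSeq_hmZeta_image :
    Set.MapsTo shiftSeq (hmZeta k ω ν '' hmGood k ω ν) (hmZeta k ω ν '' hmGood k ω ν) := by
  rintro _ ⟨x, hx, rfl⟩
  exact ⟨RotK k ω x, rotK_mem_hmGood hx, hmZeta_rotK x⟩

theorem HMAllowable.finite_hmZeta_image [NeZero k] {p q : ℕ} (h : HMAllowable ((p : ℝ) / q) ν) :
    (hmZeta k ((p : ℝ) / q) ν '' hmGood k ((p : ℝ) / q) ν).Finite := by
  refine (finite_setOf_periodic_lt h.period_pos (2 * k)).subset ?_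
  rintro _ ⟨x, hx, rfl⟩
  obtain ⟨A, hζ, -, hper⟩ := h.exists_lifted_periodic hx
  refine ⟨fun n => ?_, fun n => hζ n ▸ Nat.mod_lt _ (by simp [Nat.pos_of_neZero])⟩
  rw [hζ, hζ, hper, ← mul_assoc, Nat.add_mul_mod_self_left]

end Image

theorem statement12_general (k : ℕ) (hk : 1 ≤ k) (p q : ℕ)
    (hcop : Nat.Coprime p q)
    (ν : Fin k → ℝ) (hν : HMAllowable ((p : ℝ) / q) ν) :
    (∃ r : ℕ, 0 < r ∧ ∃ s : Fin r → (ℕ → ℕ),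
      Pairwise (Function.onFun Disjoint fun j => fwdOrbit shiftSeq (s j)) ∧
      hmB k ((p : ℝ) / q) ν = ⋃ j, fwdOrbit shiftSeq (s j) ∧
      (∀ j, Function.minimalPeriod shiftSeq (s j) = q * k / Nat.gcd p k) ∧
      ∃ c : Fin r → ℝ≥0∞, ∑ j, c j = 1 ∧
        hmLambda k ((p : ℝ) / q) ν =
          ∑ j, c j • orbitMeasure (s j) (q * k / Nat.gcd p k)) ∧
    ∀ s ∈ hmB k ((p : ℝ) / q) ν, symbRot s ((p : ℝ) / q) := by
  have : NeZero k := ⟨by omega⟩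
  have hB : hmB k ((p : ℝ) / q) ν = hmZeta k ((p : ℝ) / q) ν '' hmGood k ((p : ℝ) / q) ν :=
    hν.finite_hmZeta_image.isClosed.closure_eq
  have := hν.isProbabilityMeasure_hmLambda
  refine ⟨exists_eq_sum_orbitMeasure (hB ▸ hν.finite_hmZeta_image)
    (hB ▸ mapsTo_shiftSeq_hmZeta_image) hν.period_pos ?_ _ hν.map_shiftSeq_hmLambda
    hν.hmLambda_compl_hmB, fun s hs => ?_⟩
  · rw [hB]
    rintro _ ⟨x, hx, rfl⟩
    exact hν.minimalPeriod_hmZeta hcop hx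
  · rw [hB] at hs
    obtain ⟨x, hx, rfl⟩ := hs
    exact hν.symbRot_hmZeta hx

/-- For rational p/q in lowest terms, B_k(p/q,ν) is a finite
union of periodic orbits of minimal period qk/gcd(p,k), every element has
symbolic rotation number p/q, and λ_k(p/q,ν) is a convex combination of the
invariant measures on these orbits. -/
theorem statement12 (k : ℕ) (hk : 1 ≤ k) (p q : ℕ) (hp : 0 < p) (hpq : p < q)
    (hcop : Nat.Coprime p q)
    (ν : Fin k → ℝ) (hν : HMAllowable ((p : ℝ) / q) ν) :
    (∃ r : ℕ, 0 < r ∧ ∃ s : Fin r → (ℕ → ℕ),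
      Pairwise (Function.onFun Disjoint fun j => fwdOrbit shiftSeq (s j)) ∧
      hmB k ((p : ℝ) / q) ν = ⋃ j, fwdOrbit shiftSeq (s j) ∧
      (∀ j, Function.minimalPeriod shiftSeq (s j) = q * k / Nat.gcd p k) ∧
      ∃ c : Fin r → ℝ≥0∞, ∑ j, c j = 1 ∧
        hmLambda k ((p : ℝ) / q) ν =
          ∑ j, c j • orbitMeasure (s j) (q * k / Nat.gcd p k)) ∧
    ∀ s ∈ hmB k ((p : ℝ) / q) ν, symbRot s ((p : ℝ) / q) :=
  statement12_general k hk p q hcop ν hν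
end

section
/- Fix an integer k ≥ 1. On the set {ν ∈ ℝ^k : each ν_i ≥ 0 and 0 < ν₁+⋯+ν_k < k}, define λ_k(ν) = λ_k(ω, ν) with ω = 1 − (ν₁+⋯+ν_k)/k. Then the map ν ↦ λ_k(ν), from this set (with the ℓ¹ metric) into the Borel probability measures on Σ⁺_{2k} equipped with the topology of weak convergence, is continuous and injective. In particular λ_k(ν)([2j]) = ν_{j+1}/k and λ_k(ν)([2j+1]) = ω/k for 0 ≤ j ≤ k−1, where [m] denotes the cylinder set of sequences with first entry m. -/
open Set Filter Topology MeasureTheory Function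
open scoped ENNReal Classical

noncomputable section Aux

namespace HMwork

variable {k : ℕ} {ω : ℝ} {ν : Fin k → ℝ}

lemma psum_succ {j : ℕ} (hj : j < k) : psum ν (j + 1) = psum ν j + ν ⟨j, hj⟩ := by
  have h : ∀ i : Fin k, (if (i : ℕ) < j + 1 then ν i else 0) =
      (if (i : ℕ) < j then ν i else 0) + (if i = ⟨j, hj⟩ then ν i else 0) := by
    intro i
    by_cases h1 : (i : ℕ) < j
    · rw [if_pos (by omega), if_pos h1, if_neg (by rw [Fin.ext_iff]; simp; omega), add_zero]
    · by_cases h2 : i = ⟨j, hj⟩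
      · rw [if_pos (by rw [h2]; simp), if_neg h1, if_pos h2, zero_add]
      · rw [Fin.ext_iff] at h2
        rw [if_neg (by simp at h2 ⊢; omega), if_neg h1, if_neg (by rw [Fin.ext_iff]; exact h2),
          add_zero]
  rw [psum, Finset.sum_congr rfl fun i _ => h i, Finset.sum_add_distrib]
  simp [psum]

lemma psum_total : psum ν k = ∑ i, ν i := by
  rw [psum]; exact Finset.sum_congr rfl fun i _ => if_pos i.isLt

lemma hmL_zero : hmL ω ν 0 = 0 := by
  simp [hmL, psum]

lemma hmR_even {j : ℕ} (hj : j < k) : hmR ω ν (2 * j) = hmL ω ν (2 * j) + ν ⟨j, hj⟩ := by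
  have he : Even (2 * j) := ⟨j, by omega⟩
  have hd : 2 * j / 2 = j := by omega
  rw [hmR, hmL, if_pos he, if_pos he, hd, psum_succ hj]; ring

lemma hmR_odd (j : ℕ) : hmR ω ν (2 * j + 1) = hmL ω ν (2 * j + 1) + ω := by
  have he : ¬ Even (2 * j + 1) := by rw [Nat.even_iff]; omega
  have hd : (2 * j + 1) / 2 = j := by omega
  rw [hmR, hmL, if_neg he, if_neg he, hd]; try push_cast; try ring

lemma hmR_eq_hmL_succ (m : ℕ) : hmR ω ν m = hmL ω ν (m + 1) := by
  rcases Nat.even_or_odd m with ⟨j, rfl⟩ | ⟨j, rfl⟩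
  · have he : Even (j + j) := ⟨j, rfl⟩
    have ho : ¬ Even (j + j + 1) := by rw [Nat.even_iff]; omega
    have h1 : (j + j) / 2 = j := by omega
    have h2 : (j + j + 1) / 2 = j := by omega
    rw [hmR, hmL, if_pos he, if_neg ho, h1, h2]
  · have ho : ¬ Even (2 * j + 1) := by rw [Nat.even_iff]; omega
    have he : Even (2 * j + 1 + 1) := by rw [Nat.even_iff]; omega
    have h1 : (2 * j + 1) / 2 = j := by omega
    have h2 : (2 * j + 1 + 1) / 2 = j + 1 := by omega
    rw [hmR, hmL, if_neg ho, if_pos he, h1, h2]; try push_cast; try ring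

lemma hmL_le_hmR (hω : 0 < ω) (hν : ∀ i, 0 ≤ ν i) {m : ℕ} (hm : m < 2 * k) :
    hmL ω ν m ≤ hmR ω ν m := by
  rcases Nat.even_or_odd m with ⟨j, rfl⟩ | ⟨j, rfl⟩
  · have hj : j < k := by omega
    have : j + j = 2 * j := by omega
    rw [this, hmR_even hj]
    have := hν ⟨j, hj⟩; linarith
  · rw [hmR_odd j]; linarith

lemma hmL_mono (hω : 0 < ω) (hν : ∀ i, 0 ≤ ν i) {m m' : ℕ} (h : m ≤ m') (h2 : m' ≤ 2 * k) :
    hmL ω ν m ≤ hmL ω ν m' := by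
  induction m' with
  | zero => have : m = 0 := by omega
            rw [this]
  | succ n ih =>
    rcases Nat.lt_or_ge m (n + 1) with hlt | hge
    · calc hmL ω ν m ≤ hmL ω ν n := ih (by omega) (by omega)
        _ ≤ hmR ω ν n := hmL_le_hmR hω hν (by omega)
        _ = hmL ω ν (n + 1) := hmR_eq_hmL_succ n
    · have : m = n + 1 := by omega
      rw [this]

lemma hmL_last (hsum : ∑ i, ν i + k * ω = k) : hmL ω ν (2 * k) = k := by
  have he : Even (2 * k) := ⟨k, by omega⟩
  have hd : 2 * k / 2 = k := by omega
  rw [hmL, if_pos he, hd, psum_total]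
  exact hsum

lemma hmL_nonneg (hω : 0 < ω) (hν : ∀ i, 0 ≤ ν i) {m : ℕ} (hm : m ≤ 2 * k) :
    0 ≤ hmL ω ν m := by
  have := hmL_mono (ν := ν) hω hν (Nat.zero_le m) hm
  rwa [hmL_zero] at this

lemma hmR_le_total (hω : 0 < ω) (hν : ∀ i, 0 ≤ ν i) (hsum : ∑ i, ν i + k * ω = k)
    {m : ℕ} (hm : m < 2 * k) : hmR ω ν m ≤ k := by
  rw [hmR_eq_hmL_succ]
  have := hmL_mono (ν := ν) hω hν (show m + 1 ≤ 2 * k by omega) le_rfl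
  rwa [hmL_last hsum] at this

lemma hm_tiling (hω : 0 < ω) (hν : ∀ i, 0 ≤ ν i) (hsum : ∑ i, ν i + k * ω = k)
    {t : ℝ} (ht : t ∈ Set.Ico (0 : ℝ) k) :
    ∃ m, m < 2 * k ∧ t ∈ Set.Ico (hmL ω ν m) (hmR ω ν m) := by
  by_contra hcon
  push_neg at hcon
  have key : ∀ M, M ≤ 2 * k → hmL ω ν M ≤ t := by
    intro M
    induction M with
    | zero => intro _; rw [hmL_zero]; exact ht.1
    | succ n ih =>
      intro hn
      have h1 : hmL ω ν n ≤ t := ih (by omega)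
      rcases lt_or_ge t (hmR ω ν n) with hlt | hge
      · exact absurd ⟨h1, hlt⟩ (hcon n (by omega))
      · rwa [hmR_eq_hmL_succ n] at hge
  have := key (2 * k) le_rfl
  rw [hmL_last hsum] at this
  exact absurd ht.2 (not_lt.mpr this)

lemma hm_disjoint (hω : 0 < ω) (hν : ∀ i, 0 ≤ ν i) {m m' : ℕ} (hm : m < 2 * k)
    (hm' : m' < 2 * k) {t : ℝ} (h1 : t ∈ Set.Ico (hmL ω ν m) (hmR ω ν m))
    (h2 : t ∈ Set.Ico (hmL ω ν m') (hmR ω ν m')) : m = m' := by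
  by_contra hne
  rcases Nat.lt_or_ge m m' with h | h
  · have : hmR ω ν m ≤ hmL ω ν m' := by
      rw [hmR_eq_hmL_succ]; exact hmL_mono hω hν h (by omega)
    linarith [h1.2, h2.1]
  · have h' : m' < m := by omega
    have : hmR ω ν m' ≤ hmL ω ν m := by
      rw [hmR_eq_hmL_succ]; exact hmL_mono hω hν h' (by omega)
    linarith [h1.1, h2.2]

end HMwork
end Aux

noncomputable section Aux2
namespace HMwork

/-- Representative in [0,k). -/
noncomputable def fractK (k : ℕ) (y : ℝ) : ℝ := Int.fract (y / k) * k

/-- Concrete itinerary function on ℝ. -/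
noncomputable def Zf (k : ℕ) (ω : ℝ) (ν : Fin k → ℝ) (y : ℝ) (n : ℕ) : ℕ :=
  if h : ∃ m, m < 2 * k ∧ fractK k (y + n * ω) ∈ Set.Ico (hmL ω ν m) (hmR ω ν m)
  then Nat.find h else 0

variable {k : ℕ} {ω : ℝ} {ν : Fin k → ℝ}

lemma fractK_mem (hk : 1 ≤ k) (y : ℝ) : fractK k y ∈ Set.Ico (0 : ℝ) k := by
  have hk0 : (0 : ℝ) < k := by exact_mod_cast Nat.lt_of_lt_of_le Nat.zero_lt_one hk
  constructor
  · exact mul_nonneg (Int.fract_nonneg _) hk0.le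
  · have := Int.fract_lt_one (y / k)
    calc Int.fract (y / k) * k < 1 * k := by
          exact mul_lt_mul_of_pos_right this hk0
      _ = k := one_mul _

lemma fractK_sub (hk : 1 ≤ k) (y : ℝ) : y - fractK k y = (⌊y / (k : ℝ)⌋ : ℝ) * k := by
  have hk0 : (k : ℝ) ≠ 0 := by positivity
  rw [fractK, Int.fract]
  field_simp
  ring

lemma mkk_fractK (hk : 1 ≤ k) (y : ℝ) : mkk k (fractK k y) = mkk k y := by
  rw [mkk, mkk]
  rw [QuotientAddGroup.eq]
  refine AddSubgroup.mem_zmultiples_iff.mpr ⟨⌊y / (k : ℝ)⌋, ?_⟩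
  rw [zsmul_eq_mul]
  have := fractK_sub hk y
  linarith

lemma fractK_add_left (hk : 1 ≤ k) (y c : ℝ) :
    fractK k (fractK k y + c) = fractK k (y + c) := by
  rw [fractK, fractK, fractK]
  have hk0 : (k : ℝ) ≠ 0 := by positivity
  have h1 : (Int.fract (y / k) * k + c) / k = y / k - ⌊y / (k : ℝ)⌋ + c / k := by
    rw [Int.fract]; field_simp; try ring
  have h2 : (y + c) / k = y / k + c / k := by field_simp
  rw [h1, h2]
  have h3 : y / k - ⌊y / (k:ℝ)⌋ + c / k = (y / k + c / k) - (⌊y / (k:ℝ)⌋ : ℝ) := by ring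
  rw [h3, Int.fract_sub_intCast]

lemma Zf_spec (hk : 1 ≤ k) (hω : 0 < ω) (hν : ∀ i, 0 ≤ ν i)
    (hsum : ∑ i, ν i + k * ω = k) (y : ℝ) (n : ℕ) :
    Zf k ω ν y n < 2 * k ∧
      fractK k (y + n * ω) ∈ Set.Ico (hmL ω ν (Zf k ω ν y n)) (hmR ω ν (Zf k ω ν y n)) := by
  have hex : ∃ m, m < 2 * k ∧ fractK k (y + n * ω) ∈ Set.Ico (hmL ω ν m) (hmR ω ν m) :=
    hm_tiling hω hν hsum (fractK_mem hk _)
  rw [Zf, dif_pos hex]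
  exact Nat.find_spec hex

lemma Zf_eq_iff (hk : 1 ≤ k) (hω : 0 < ω) (hν : ∀ i, 0 ≤ ν i)
    (hsum : ∑ i, ν i + k * ω = k) {y : ℝ} {n m : ℕ} (hm : m < 2 * k) :
    Zf k ω ν y n = m ↔ fractK k (y + n * ω) ∈ Set.Ico (hmL ω ν m) (hmR ω ν m) := by
  obtain ⟨h1, h2⟩ := Zf_spec hk hω hν hsum (ν := ν) y n
  constructor
  · intro h; rwa [h] at h2
  · intro h; exact hm_disjoint hω hν h1 hm h2 h

lemma measurable_Zf (hk : 1 ≤ k) (hω : 0 < ω) (hν : ∀ i, 0 ≤ ν i)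
    (hsum : ∑ i, ν i + k * ω = k) : Measurable (Zf k ω ν) := by
  refine measurable_pi_lambda _ fun n => ?_
  have hex : ∀ y : ℝ, ∃ m, m < 2 * k ∧
      fractK k (y + n * ω) ∈ Set.Ico (hmL ω ν m) (hmR ω ν m) := fun y =>
    hm_tiling hω hν hsum (fractK_mem hk _)
  have heq : (fun y => Zf k ω ν y n) = fun y => Nat.find (hex y) := by
    funext y; rw [Zf, dif_pos (hex y)]
  rw [heq]
  apply measurable_find
  intro m
  have : {y : ℝ | m < 2 * k ∧ fractK k (y + n * ω) ∈ Set.Ico (hmL ω ν m) (hmR ω ν m)} =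
      {y : ℝ | m < 2 * k} ∩ ((fun y => fractK k (y + n * ω)) ⁻¹'
        Set.Ico (hmL ω ν m) (hmR ω ν m)) := rfl
  rw [this]
  refine MeasurableSet.inter (MeasurableSet.const _) ?_
  have hmeas : Measurable fun y : ℝ => fractK k (y + n * ω) := by
    apply Measurable.mul_const
    exact (measurable_fract.comp ((measurable_id.add_const _).div_const _))
  exact hmeas measurableSet_Ico

end HMwork
end Aux2

noncomputable section Aux3
namespace HMwork

variable {k : ℕ} {ω : ℝ} {ν : Fin k → ℝ}

lemma mkk_add (a b : ℝ) : mkk k (a + b) = mkk k a + mkk k b := rfl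

lemma rotk_iterate (y : ℝ) (n : ℕ) :
    (RotK k ω)^[n] (mkk k y) = mkk k (y + n * ω) := by
  induction n with
  | zero => simp
  | succ n ih =>
    rw [Function.iterate_succ_apply', ih, RotK, ← mkk_add]
    congr 1
    push_cast
    ring

lemma mkk_eq_mkk_iff {a b : ℝ} (hk : 1 ≤ k) :
    mkk k a = mkk k b ↔ ∃ z : ℤ, b - a = z * k := by
  rw [mkk, mkk, QuotientAddGroup.eq]
  constructor
  · rintro h
    obtain ⟨z, hz⟩ := AddSubgroup.mem_zmultiples_iff.mp h
    exact ⟨z, by rw [zsmul_eq_mul] at hz; linarith⟩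
  · rintro ⟨z, hz⟩
    exact AddSubgroup.mem_zmultiples_iff.mpr ⟨z, by rw [zsmul_eq_mul]; linarith⟩

lemma countable_mkk_preimage (hk : 1 ≤ k) (c : CircleK k) :
    (mkk k ⁻¹' {c}).Countable := by
  obtain ⟨e, rfl⟩ : ∃ e : ℝ, mkk k e = c := Quot.exists_rep c
  refine Set.Countable.mono (fun y hy => ?_) (Set.countable_range fun z : ℤ => e - z * k)
  obtain ⟨z, hz⟩ := (mkk_eq_mkk_iff hk).mp (hy : mkk k y = mkk k e)
  refine Set.mem_range.mpr ⟨z, ?_⟩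
  show e - (z : ℝ) * k = y
  linarith

lemma good_mem_iff (y : ℝ) :
    mkk k y ∈ hmGood k ω ν ↔ ∀ n : ℕ, ∀ m, m < 2 * k →
      mkk k (y + n * ω) ≠ mkk k (hmL ω ν m) ∧ mkk k (y + n * ω) ≠ mkk k (hmR ω ν m) := by
  unfold hmGood
  simp only [Set.mem_setOf_eq, rotk_iterate]

lemma countable_badR (hk : 1 ≤ k) : {y : ℝ | mkk k y ∉ hmGood k ω ν}.Countable := by
  have hsub : {y : ℝ | mkk k y ∉ hmGood k ω ν} ⊆
      ⋃ (n : ℕ), ⋃ (m : ℕ),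
        (mkk k ⁻¹' {mkk k (hmL ω ν m - n * ω)} ∪ mkk k ⁻¹' {mkk k (hmR ω ν m - n * ω)}) := by
    intro y hy
    rw [Set.mem_setOf_eq, good_mem_iff] at hy
    push_neg at hy
    obtain ⟨n, m, _, hcase⟩ := hy
    have key : ∀ e : ℝ, mkk k (y + n * ω) = mkk k e → mkk k y = mkk k (e - n * ω) := by
      intro e he
      obtain ⟨z, hz⟩ := (mkk_eq_mkk_iff hk).mp he
      exact (mkk_eq_mkk_iff hk).mpr ⟨z, by linarith⟩
    rcases eq_or_ne (mkk k (y + n * ω)) (mkk k (hmL ω ν m)) with h | h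
    · exact Set.mem_iUnion.mpr ⟨n, Set.mem_iUnion.mpr ⟨m, Or.inl (key _ h)⟩⟩
    · exact Set.mem_iUnion.mpr ⟨n, Set.mem_iUnion.mpr ⟨m, Or.inr (key _ (hcase h))⟩⟩
  refine Set.Countable.mono hsub ?_
  exact Set.countable_iUnion fun n => Set.countable_iUnion fun m =>
    ((countable_mkk_preimage hk _).union (countable_mkk_preimage hk _))

lemma badR_null (hk : 1 ≤ k) : volume {y : ℝ | mkk k y ∉ hmGood k ω ν} = 0 :=
  (countable_badR hk).measure_zero _

lemma good_compl_countable (hk : 1 ≤ k) : (hmGood k ω ν)ᶜ.Countable := by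
  have : (hmGood k ω ν)ᶜ ⊆ mkk k '' {y : ℝ | mkk k y ∉ hmGood k ω ν} := by
    intro x hx
    obtain ⟨y, rfl⟩ : ∃ y : ℝ, mkk k y = x := Quot.exists_rep x
    exact ⟨y, hx, rfl⟩
  exact Set.Countable.mono this ((countable_badR hk).image _)

lemma measurableSet_good (hk : 1 ≤ k) : MeasurableSet (hmGood k ω ν) := by
  rw [← compl_compl (hmGood k ω ν)]
  exact ((good_compl_countable hk).measurableSet).compl

lemma Zf_fractK (hk : 1 ≤ k) (y : ℝ) : Zf k ω ν (fractK k y) = Zf k ω ν y := by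
  funext n
  unfold Zf
  simp only [fractK_add_left hk]

lemma good_zeta (hk : 1 ≤ k) (hω : 0 < ω) (hν : ∀ i, 0 ≤ ν i)
    (hsum : ∑ i, ν i + k * ω = k) {y : ℝ} (hy : mkk k y ∈ hmGood k ω ν) :
    hmZeta k ω ν (mkk k y) = Zf k ω ν y := by
  funext n
  rw [hmZeta, rotk_iterate]
  set t := fractK k (y + n * ω) with htdef
  obtain ⟨hm0, ht⟩ := Zf_spec hk hω hν hsum (ν := ν) y n
  set m0 := Zf k ω ν y n with hm0def
  have hmkt : mkk k t = mkk k (y + n * ω) := mkk_fractK hk _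
  have hgood := (good_mem_iff y).mp hy n
  have hk2 : 0 < 2 * k := by omega
  have htIco := fractK_mem hk (y + n * ω)
  have ht0 : 0 < t := by
    rcases lt_or_eq_of_le htIco.1 with h | h
    · exact h
    · exfalso
      apply (hgood 0 hk2).1
      rw [hmL_zero, ← mkk_fractK hk (y + n * ω), ← h]
  have hex : ∃ m, m < 2 * k ∧ mkk k (y + n * ω) ∈ mkk k '' hmX ω ν m :=
    ⟨m0, hm0, ⟨t, ⟨ht.1, le_of_lt ht.2⟩, hmkt⟩⟩
  rw [hmAddr, dif_pos hex]
  obtain ⟨hm', z, hz, hzeq⟩ := hex.choose_spec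
  set m' := hex.choose with hm'def
  -- z = t
  have hz0 : 0 ≤ z := le_trans (hmL_nonneg hω hν (le_of_lt (by omega))) hz.1
  have hzk : z ≤ k := le_trans hz.2 (hmR_le_total hω hν hsum hm')
  have hzt : z = t := by
    obtain ⟨c, hc⟩ := (mkk_eq_mkk_iff hk).mp (hzeq.trans hmkt.symm)
    have hkpos : (0 : ℝ) < k := by exact_mod_cast Nat.lt_of_lt_of_le Nat.zero_lt_one hk
    have hc1 : (c : ℝ) < 1 := by
      by_contra hcon
      push_neg at hcon
      have : (k : ℝ) ≤ (c : ℝ) * k := le_mul_of_one_le_left hkpos.le hcon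
      have := htIco.2
      linarith
    have hc2 : (-1 : ℝ) < c := by
      by_contra hcon
      push_neg at hcon
      have : (c : ℝ) * k ≤ (-1 : ℝ) * k := mul_le_mul_of_nonneg_right hcon hkpos.le
      linarith
    have : c = 0 := by
      have h1 : c < 1 := by exact_mod_cast hc1
      have h2 : -1 < c := by exact_mod_cast hc2
      omega
    rw [this] at hc
    push_cast at hc
    linarith
  have htne : t ≠ hmL ω ν m' ∧ t ≠ hmR ω ν m' := by
    constructor
    · intro h; exact (hgood m' hm').1 (by rw [← hmkt, h])
    · intro h; exact (hgood m' hm').2 (by rw [← hmkt, h])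
  have htIoo : t ∈ Set.Ico (hmL ω ν m') (hmR ω ν m') := by
    rw [← hzt]
    exact ⟨hz.1, lt_of_le_of_ne (hzt ▸ hz.2) (hzt ▸ htne.2)⟩
  exact ((Zf_eq_iff hk hω hν hsum hm').mpr htIoo).symm

end HMwork
end Aux3

noncomputable section Aux4
namespace HMwork

variable {k : ℕ} {ω : ℝ} {ν : Fin k → ℝ}

lemma kpos (hk : 1 ≤ k) : (0 : ℝ) < k := by
  exact_mod_cast Nat.lt_of_lt_of_le Nat.zero_lt_one hk

lemma fractK_self (hk : 1 ≤ k) {y : ℝ} (hy : y ∈ Set.Ico (0 : ℝ) k) : fractK k y = y := by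
  have hk0 := kpos hk
  rw [fractK, Int.fract_eq_self.mpr ⟨div_nonneg hy.1 hk0.le, (div_lt_one hk0).mpr hy.2⟩]
  field_simp

lemma measurable_mkk : Measurable (mkk k) := (AddCircle.continuous_mk' _).measurable

lemma hmLambda_eq (hk : 1 ≤ k) (hω : 0 < ω) (hν : ∀ i, 0 ≤ ν i)
    (hsum : ∑ i, ν i + k * ω = k) :
    hmLambda k ω ν
      = (k : ℝ≥0∞)⁻¹ • (volume.restrict (Set.Ico (0 : ℝ) k)).map (Zf k ω ν) := by
  haveI : Fact ((0 : ℝ) < k) := ⟨kpos hk⟩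
  set ZC : CircleK k → ℕ → ℕ :=
    fun x => Zf k ω ν ((AddCircle.measurableEquivIco (k : ℝ) 0 x : ℝ)) with hZCdef
  have hZC_meas : Measurable ZC :=
    (measurable_Zf hk hω hν hsum).comp
      (measurable_subtype_coe.comp (AddCircle.measurableEquivIco (k : ℝ) 0).measurable)
  have hZC_mkk : ∀ y : ℝ, ZC (mkk k y) = Zf k ω ν y := by
    intro y
    have h1 : ((AddCircle.equivIco (k : ℝ) 0 (mkk k y)) : ℝ) = Int.fract (y / k) * k :=
      AddCircle.coe_equivIco_mk_apply (p := (k : ℝ)) y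
    show Zf k ω ν ((AddCircle.equivIco (k : ℝ) 0 (mkk k y)) : ℝ) = Zf k ω ν y
    rw [show ((AddCircle.equivIco (k : ℝ) 0 (mkk k y)) : ℝ) = fractK k y from h1,
      Zf_fractK hk]
  have hζ_ZC : ∀ x ∈ hmGood k ω ν, hmZeta k ω ν x = ZC x := by
    intro x hx
    obtain ⟨y, rfl⟩ : ∃ y, mkk k y = x := Quot.exists_rep x
    rw [good_zeta hk hω hν hsum hx, hZC_mkk]
  unfold hmLambda
  congr 1
  set μ0 := (volume.restrict (Set.Ico (0 : ℝ) (k : ℝ))).map (mkk k) with hμ0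
  have hGm : MeasurableSet (hmGood k ω ν) := measurableSet_good hk
  have e1 : (μ0.restrict (hmGood k ω ν)).map (hmZeta k ω ν)
      = (μ0.restrict (hmGood k ω ν)).map ZC :=
    Measure.map_congr (Filter.Eventually.mono (self_mem_ae_restrict hGm) hζ_ZC)
  have e2 : μ0.restrict (hmGood k ω ν)
      = ((volume.restrict (Set.Ico (0 : ℝ) k)).restrict (mkk k ⁻¹' hmGood k ω ν)).map (mkk k) :=
    Measure.restrict_map measurable_mkk hGm
  rw [e1, e2, Measure.map_map hZC_meas measurable_mkk]
  have e3 : ZC ∘ mkk k = Zf k ω ν := funext hZC_mkk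
  rw [e3]
  congr 1
  rw [Measure.restrict_restrict (measurable_mkk hGm)]
  apply Measure.restrict_congr_set
  have hae : ∀ᵐ y : ℝ, mkk k y ∈ hmGood k ω ν := by
    rw [ae_iff]
    exact badR_null hk
  refine Filter.eventuallyEq_set.mpr (hae.mono fun y hy => ?_)
  simp [Set.mem_inter_iff, hy]

lemma map_cylinder (hk : 1 ≤ k) (hω : 0 < ω) (hν : ∀ i, 0 ≤ ν i)
    (hsum : ∑ i, ν i + k * ω = k) {m : ℕ} (hm : m < 2 * k) :
    ((volume.restrict (Set.Ico (0 : ℝ) k)).map (Zf k ω ν)) {s : ℕ → ℕ | s 0 = m}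
      = ENNReal.ofReal (hmR ω ν m - hmL ω ν m) := by
  have hmeasset : MeasurableSet {s : ℕ → ℕ | s 0 = m} := by
    have : {s : ℕ → ℕ | s 0 = m} = (fun s : ℕ → ℕ => s 0) ⁻¹' {m} := rfl
    rw [this]
    exact (measurable_pi_apply 0) (measurableSet_singleton m)
  rw [Measure.map_apply (measurable_Zf hk hω hν hsum) hmeasset,
    Measure.restrict_apply' measurableSet_Ico]
  have key : Zf k ω ν ⁻¹' {s : ℕ → ℕ | s 0 = m} ∩ Set.Ico (0 : ℝ) k
      = Set.Ico (hmL ω ν m) (hmR ω ν m) := by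
    ext y
    constructor
    · rintro ⟨hZ, hy⟩
      have h0 : fractK k (y + (0 : ℕ) * ω) = y := by
        rw [show y + (0 : ℕ) * ω = y by push_cast; ring]
        exact fractK_self hk hy
      have := (Zf_eq_iff hk hω hν hsum hm).mp hZ
      rwa [h0] at this
    · intro hy
      have hy' : y ∈ Set.Ico (0 : ℝ) k :=
        ⟨le_trans (hmL_nonneg hω hν (le_of_lt hm)) hy.1,
          lt_of_lt_of_le hy.2 (hmR_le_total hω hν hsum hm)⟩
      have h0 : fractK k (y + (0 : ℕ) * ω) = y := by
        rw [show y + (0 : ℕ) * ω = y by push_cast; ring]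
        exact fractK_self hk hy'
      refine ⟨(Zf_eq_iff hk hω hν hsum hm).mpr ?_, hy'⟩
      rwa [h0]
  rw [key, Real.volume_Ico]

lemma hmLambda_cylinder (hk : 1 ≤ k) (hω : 0 < ω) (hν : ∀ i, 0 ≤ ν i)
    (hsum : ∑ i, ν i + k * ω = k) {m : ℕ} (hm : m < 2 * k) :
    hmLambda k ω ν {s : ℕ → ℕ | s 0 = m}
      = ENNReal.ofReal ((hmR ω ν m - hmL ω ν m) / k) := by
  rw [hmLambda_eq hk hω hν hsum, Measure.smul_apply, map_cylinder hk hω hν hsum hm,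
    smul_eq_mul]
  have hkpos := kpos hk
  rw [ENNReal.ofReal_div_of_pos hkpos, ENNReal.div_eq_inv_mul]
  congr 1
  rw [ENNReal.ofReal_natCast]

lemma integral_hmLambda (hk : 1 ≤ k) (hω : 0 < ω) (hν : ∀ i, 0 ≤ ν i)
    (hsum : ∑ i, ν i + k * ω = k) (f : BoundedContinuousFunction (ℕ → ℕ) ℝ) :
    ∫ s, f s ∂(hmLambda k ω ν)
      = (k : ℝ)⁻¹ * ∫ y in Set.Ico (0 : ℝ) k, f (Zf k ω ν y) := by
  rw [hmLambda_eq hk hω hν hsum, integral_smul_measure,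
    integral_map (measurable_Zf hk hω hν hsum).aemeasurable
      f.continuous.measurable.aestronglyMeasurable]
  rw [smul_eq_mul]
  congr 1
  rw [ENNReal.toReal_inv]
  simp

end HMwork
end Aux4

noncomputable section Aux5
namespace HMwork

variable {k : ℕ}

lemma tendsto_psum {ν : Fin k → ℝ} {v : ℕ → Fin k → ℝ}
    (hv : Tendsto v atTop (𝓝 ν)) (j0 : ℕ) :
    Tendsto (fun j => psum (v j) j0) atTop (𝓝 (psum ν j0)) := by
  unfold psum
  apply tendsto_finset_sum
  intro i _
  by_cases h : (i : ℕ) < j0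
  · simp only [if_pos h]
    exact tendsto_pi_nhds.mp hv i
  · simp only [if_neg h]
    exact tendsto_const_nhds

lemma tendsto_hmL {ω : ℝ} {ν : Fin k → ℝ} {ωv : ℕ → ℝ} {v : ℕ → Fin k → ℝ}
    (hv : Tendsto v atTop (𝓝 ν)) (hωv : Tendsto ωv atTop (𝓝 ω)) (m : ℕ) :
    Tendsto (fun j => hmL (ωv j) (v j) m) atTop (𝓝 (hmL ω ν m)) := by
  unfold hmL
  split_ifs
  · exact (tendsto_psum hv _).add (hωv.const_mul _)
  · exact (tendsto_psum hv _).add (hωv.const_mul _)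

lemma tendsto_hmR {ω : ℝ} {ν : Fin k → ℝ} {ωv : ℕ → ℝ} {v : ℕ → Fin k → ℝ}
    (hv : Tendsto v atTop (𝓝 ν)) (hωv : Tendsto ωv atTop (𝓝 ω)) (m : ℕ) :
    Tendsto (fun j => hmR (ωv j) (v j) m) atTop (𝓝 (hmR ω ν m)) := by
  unfold hmR
  split_ifs
  · exact (tendsto_psum hv _).add (hωv.const_mul _)
  · exact (tendsto_psum hv _).add (hωv.const_mul _)

lemma Zf_eventually_eq (hk : 1 ≤ k) {ω : ℝ} {ν : Fin k → ℝ}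
    (hω : 0 < ω) (hν : ∀ i, 0 ≤ ν i) (hsum : ∑ i, ν i + k * ω = k)
    {ωv : ℕ → ℝ} {v : ℕ → Fin k → ℝ}
    (hωvpos : ∀ j, 0 < ωv j) (hνv : ∀ j i, 0 ≤ v j i)
    (hsumv : ∀ j, ∑ i, v j i + k * ωv j = k)
    (hv : Tendsto v atTop (𝓝 ν)) (hωv : Tendsto ωv atTop (𝓝 ω))
    {y : ℝ} (hy : mkk k y ∈ hmGood k ω ν) (n : ℕ) :
    ∀ᶠ j in atTop, Zf k (ωv j) (v j) y n = Zf k ω ν y n := by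
  obtain ⟨hm, ht⟩ := Zf_spec hk hω hν hsum y n
  set m := Zf k ω ν y n with hmdef
  set t := fractK k (y + n * ω) with htdef
  have hgood := (good_mem_iff y).mp hy n
  have hmkt : mkk k t = mkk k (y + n * ω) := mkk_fractK hk _
  have hk2 : 0 < 2 * k := by omega
  have htIco := fractK_mem hk (y + n * ω)
  have ht0 : 0 < t := by
    rcases lt_or_eq_of_le htIco.1 with h | h
    · exact h
    · exfalso
      apply (hgood 0 hk2).1
      rw [hmL_zero, ← mkk_fractK hk (y + n * ω), ← h]
  have htL : hmL ω ν m < t := by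
    rcases lt_or_eq_of_le ht.1 with h | h
    · exact h
    · exact absurd (by rw [← hmkt, ← h] : mkk k (y + n * ω) = mkk k (hmL ω ν m)).symm
        (Ne.symm ((hgood m hm).1))
  -- continuity of fractK at y + n * ω
  have hne : (y + n * ω) / k ≠ (⌊(y + n * ω) / (k : ℝ)⌋ : ℝ) := by
    intro hcon
    apply ht0.ne'
    rw [htdef, fractK, Int.fract, hcon]
    simp
  have hxj : Tendsto (fun j => y + n * ωv j) atTop (𝓝 (y + n * ω)) :=
    tendsto_const_nhds.add (hωv.const_mul _)
  have htj : Tendsto (fun j => fractK k (y + n * ωv j)) atTop (𝓝 t) := by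
    have h2 : Tendsto (fun j => (y + n * ωv j) / (k : ℝ)) atTop (𝓝 ((y + n * ω) / k)) :=
      hxj.div_const _
    have h3 : Tendsto (fun j => Int.fract ((y + n * ωv j) / (k : ℝ))) atTop
        (𝓝 (Int.fract ((y + n * ω) / k))) := ((continuousAt_fract hne).tendsto).comp h2
    have h4 := h3.mul_const (k : ℝ)
    exact h4
  have hLj := tendsto_hmL hv hωv m
  have hRj := tendsto_hmR hv hωv m
  have ev1 : ∀ᶠ j in atTop, hmL (ωv j) (v j) m < fractK k (y + n * ωv j) :=
    hLj.eventually_lt htj htL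
  have ev2 : ∀ᶠ j in atTop, fractK k (y + n * ωv j) < hmR (ωv j) (v j) m :=
    htj.eventually_lt hRj ht.2
  filter_upwards [ev1, ev2] with j h1 h2
  exact (Zf_eq_iff hk (hωvpos j) (hνv j) (hsumv j) hm).mpr ⟨le_of_lt h1, h2⟩

end HMwork
end Aux5

open HMwork in
/-- With ω = 1 − (Σνᵢ)/k, the map ν ↦ λ_k(ν) is continuous
(for the weak topology on measures) and injective on the allowable parameter
domain, and gives the stated measures of one-symbol cylinders. -/
theorem statement15 (k : ℕ) (hk : 1 ≤ k) :
    (∀ f : BoundedContinuousFunction (ℕ → ℕ) ℝ,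
      ContinuousOn
        (fun ν : Fin k → ℝ => ∫ s, f s ∂(hmLambda k (1 - (∑ i, ν i) / k) ν))
        {ν | (∀ i, 0 ≤ ν i) ∧ 0 < ∑ i, ν i ∧ ∑ i, ν i < k}) ∧
    Set.InjOn (fun ν : Fin k → ℝ => hmLambda k (1 - (∑ i, ν i) / k) ν)
      {ν | (∀ i, 0 ≤ ν i) ∧ 0 < ∑ i, ν i ∧ ∑ i, ν i < k} ∧
    ∀ ν : Fin k → ℝ, ν ∈ {ν : Fin k → ℝ | (∀ i, 0 ≤ ν i) ∧ 0 < ∑ i, ν i ∧ ∑ i, ν i < k} →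
      ∀ j : Fin k,
        hmLambda k (1 - (∑ i, ν i) / k) ν {s | s 0 = 2 * (j : ℕ)} =
          ENNReal.ofReal (ν j / k) ∧
        hmLambda k (1 - (∑ i, ν i) / k) ν {s | s 0 = 2 * (j : ℕ) + 1} =
          ENNReal.ofReal ((1 - (∑ i, ν i) / k) / k) := by
  have hkR : (0 : ℝ) < k := kpos hk
  have hk0 : (k : ℝ) ≠ 0 := hkR.ne'
  set S : Set (Fin k → ℝ) := {ν | (∀ i, 0 ≤ ν i) ∧ 0 < ∑ i, ν i ∧ ∑ i, ν i < k} with hSdef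
  -- basic facts for allowable parameters
  have hω0 : ∀ ν ∈ S, 0 < 1 - (∑ i, ν i) / k := by
    intro ν hν
    rw [sub_pos, div_lt_one hkR]
    exact hν.2.2
  have hsum : ∀ ν ∈ S, ∑ i, ν i + (k : ℝ) * (1 - (∑ i, ν i) / k) = k := by
    intro ν _
    rw [mul_sub, mul_one, mul_div_cancel₀ _ hk0]
    ring
  -- Part 3 (cylinders), proved first and reused.
  have key : ∀ ν ∈ S, ∀ j : Fin k,
      hmLambda k (1 - (∑ i, ν i) / k) ν {s | s 0 = 2 * (j : ℕ)} =
        ENNReal.ofReal (ν j / k) ∧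
      hmLambda k (1 - (∑ i, ν i) / k) ν {s | s 0 = 2 * (j : ℕ) + 1} =
        ENNReal.ofReal ((1 - (∑ i, ν i) / k) / k) := by
    intro ν hν j
    set ω := 1 - (∑ i, ν i) / k with hωdef
    have hω := hω0 ν hν
    have hs := hsum ν hν
    constructor
    · rw [hmLambda_cylinder hk hω hν.1 hs (by omega : 2 * (j : ℕ) < 2 * k)]
      congr 1
      rw [hmR_even j.isLt, Fin.eta]
      ring
    · rw [hmLambda_cylinder hk hω hν.1 hs (by omega : 2 * (j : ℕ) + 1 < 2 * k)]
      congr 1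
      rw [hmR_odd (j : ℕ)]
      ring
  refine ⟨?_, ?_, key⟩
  · -- continuity
    intro f ν0 hν0
    have hωdef := hω0 ν0 hν0
    rw [ContinuousWithinAt]
    apply tendsto_iff_seq_tendsto.mpr
    intro u hu
    have hus : ∀ᶠ j in atTop, u j ∈ S := hu self_mem_nhdsWithin
    have huν : Tendsto u atTop (𝓝 ν0) := hu.mono_right nhdsWithin_le_nhds
    set v : ℕ → Fin k → ℝ := fun j => if u j ∈ S then u j else ν0 with hvdef
    have hvs : ∀ j, v j ∈ S := by
      intro j
      by_cases h : u j ∈ S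
      · simp only [hvdef, if_pos h]; exact h
      · simp only [hvdef, if_neg h]; exact hν0
    have huv : u =ᶠ[atTop] v := hus.mono fun j hj => by simp only [hvdef, if_pos hj]
    have hvν : Tendsto v atTop (𝓝 ν0) := huν.congr' huv
    set F : (Fin k → ℝ) → ℝ :=
      fun ν => ∫ s, f s ∂(hmLambda k (1 - (∑ i, ν i) / k) ν) with hFdef
    have hFuv : (fun j => F (u j)) =ᶠ[atTop] fun j => F (v j) := huv.mono fun j hj => by show F (u j) = F (v j); rw [hj]
    refine Tendsto.congr' hFuv.symm ?_
    -- sequence of parameters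
    set ωv : ℕ → ℝ := fun j => 1 - (∑ i, v j i) / k with hωvdef
    set ω := 1 - (∑ i, ν0 i) / k with hωdef2
    have hωvpos : ∀ j, 0 < ωv j := fun j => hω0 _ (hvs j)
    have hνv : ∀ j i, 0 ≤ v j i := fun j => (hvs j).1
    have hsumv : ∀ j, ∑ i, v j i + (k : ℝ) * ωv j = k := fun j => hsum _ (hvs j)
    have hsum0 := hsum ν0 hν0
    have hωconv : Tendsto ωv atTop (𝓝 ω) := by
      apply Tendsto.const_sub
      apply Tendsto.div_const
      exact tendsto_finset_sum _ fun i _ => tendsto_pi_nhds.mp hvν i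
    have hFv : ∀ j, F (v j)
        = (k : ℝ)⁻¹ * ∫ y in Set.Ico (0 : ℝ) k, f (Zf k (ωv j) (v j) y) := fun j =>
      integral_hmLambda hk (hωvpos j) (hνv j) (hsumv j) f
    have hF0 : F ν0 = (k : ℝ)⁻¹ * ∫ y in Set.Ico (0 : ℝ) k, f (Zf k ω ν0 y) :=
      integral_hmLambda hk hωdef hν0.1 hsum0 f
    rw [show (∫ s, f s ∂(hmLambda k ω ν0))
        = (k : ℝ)⁻¹ * ∫ y in Set.Ico (0 : ℝ) k, f (Zf k ω ν0 y) from hF0]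
    have : (fun j => F (v j))
        = fun j => (k : ℝ)⁻¹ * ∫ y in Set.Ico (0 : ℝ) k, f (Zf k (ωv j) (v j) y) :=
      funext hFv
    rw [this]
    apply Tendsto.const_mul
    -- dominated convergence
    have hae : ∀ᵐ y ∂(volume.restrict (Set.Ico (0 : ℝ) k)), mkk k y ∈ hmGood k ω ν0 :=
      ae_restrict_of_ae (ae_iff.mpr (badR_null hk))
    apply tendsto_integral_of_dominated_convergence (fun _ => ‖f‖)
    · intro j
      exact (f.continuous.measurable.comp
        (measurable_Zf hk (hωvpos j) (hνv j) (hsumv j))).aestronglyMeasurable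
    · exact integrable_const _
    · intro j
      exact Filter.Eventually.of_forall fun y => f.norm_coe_le_norm _
    · filter_upwards [hae] with y hy
      refine (f.continuous.tendsto _).comp ?_
      refine tendsto_pi_nhds.mpr fun n => ?_
      have hev := Zf_eventually_eq hk hωdef hν0.1 hsum0 hωvpos hνv hsumv hvν hωconv hy n
      exact Tendsto.congr' (hev.mono fun j hj => hj.symm) tendsto_const_nhds
  · -- injectivity
    intro ν1 h1 ν2 h2 heq
    funext i
    have e1 := (key ν1 h1 i).1
    have e2 := (key ν2 h2 i).1
    simp only at heq
    rw [heq] at e1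
    rw [e2] at e1
    have := (ENNReal.ofReal_eq_ofReal_iff
      (div_nonneg (h2.1 i) hkR.le) (div_nonneg (h1.1 i) hkR.le)).mp e1
    field_simp at this
    exact this.symm
end
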